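/- arXiv:1812.10848 — 7 statements merged into one kernel-verified Lean document; each statement's English description precedes it below -/
import Mathlib

section
/- Let f : ℝ → ℝ be a twice continuously differentiable function solving the second-order linear ODE f''(z) = Φ(z)·f(z), where Φ : ℝ → ℝ is continuous and Φ(z) > 0 for every z. If f is not identically zero, then f is not square-integrable on ℝ (i.e., f ∉ L²(ℝ)). -/
open MeasureTheory Set

/-- A function bounded below by a positive constant on a set of infinite
measure is not integrable. -/
lemma not_integrable_of_bddBelow_on {g : ℝ → ℝ} {d : ℝ} (hd : 0 < d)
    {s : Set ℝ} (hs : MeasurableSet s) (hvol : volume s = ⊤)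
    (hbound : ∀ z ∈ s, d ≤ g z) : ¬ Integrable g volume := by
  intro hi
  have his : IntegrableOn g s volume := hi.integrableOn
  have hconst : IntegrableOn (fun _ : ℝ => d) s volume := by
    refine his.mono' aestronglyMeasurable_const ?_
    rw [ae_restrict_iff' hs]
    filter_upwards with z hz
    rw [Real.norm_eq_abs, abs_of_pos hd]
    exact hbound z hz
  rw [integrableOn_const_iff] at hconst
  rcases hconst with h | h
  · exact absurd (enorm_eq_zero.mp h) hd.ne'
  · rw [hvol] at h; exact absurd h (by simp)

/-- If `f : ℝ → ℝ` is twice continuously differentiable, solves `f'' = Φ · f` with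
`Φ` continuous and everywhere positive, and `f` is not identically zero, then `f`
is not square-integrable on `ℝ`. -/
theorem not_sq_integrable_of_ode
    (f Φ : ℝ → ℝ)
    (hf : ContDiff ℝ 2 f)
    (hΦ : Continuous Φ)
    (hΦpos : ∀ z : ℝ, 0 < Φ z)
    (hode : ∀ z : ℝ, deriv (deriv f) z = Φ z * f z)
    (hne : f ≠ 0) :
    ¬ Integrable (fun z : ℝ => (f z) ^ 2) volume := by
  -- basic differentiability facts
  have hd1 : Differentiable ℝ f := hf.differentiable (by norm_num)
  have hf2 : ContDiff ℝ 1 (deriv f) := by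
    have h2 : ContDiff ℝ (1 + 1 : ℕ) f := by norm_num [hf]
    exact ((contDiff_succ_iff_deriv (n := 1)).mp h2).2.2
  have hd2 : Differentiable ℝ (deriv f) := hf2.differentiable (by norm_num)
  -- the auxiliary function h = f * f'
  set h : ℝ → ℝ := fun z => f z * deriv f z with hh
  have hdh : Differentiable ℝ h := hd1.mul hd2
  have hderivh : ∀ z, deriv h z = (deriv f z) ^ 2 + Φ z * f z ^ 2 := by
    intro z
    rw [hh, deriv_fun_mul (hd1 z) (hd2 z), hode z]
    ring
  have hderivh_nonneg : ∀ z, 0 ≤ deriv h z := by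
    intro z
    rw [hderivh z]
    exact add_nonneg (sq_nonneg _) (mul_nonneg (hΦpos z).le (sq_nonneg _))
  have hmono : Monotone h := monotone_of_deriv_nonneg hdh hderivh_nonneg
  -- derivative of f^2
  have hderivsq : ∀ z, deriv (fun z => f z ^ 2) z = 2 * h z := by
    intro z
    have := ((hd1 z).hasDerivAt.pow 2).deriv
    rw [show (fun z => f z ^ 2) = f ^ 2 from rfl, this, hh]
    ring
  have hdsq : Differentiable ℝ (fun z => f z ^ 2) := fun z =>
    ((hd1 z).hasDerivAt.pow 2).differentiableAt
  -- case analysis on the sign of h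
  by_cases hpos : ∃ z₀, 0 < h z₀
  · -- h positive somewhere : f² grows on a right half-line
    obtain ⟨z₀, hz₀⟩ := hpos
    have hfz₀ : f z₀ ≠ 0 := by
      intro h0
      rw [hh] at hz₀; simp only [h0, zero_mul] at hz₀; exact lt_irrefl 0 hz₀
    have hd : 0 < f z₀ ^ 2 := by positivity
    -- f² is monotone on [z₀, ∞)
    have hmon : MonotoneOn (fun z => f z ^ 2) (Ici z₀) := by
      apply monotoneOn_of_deriv_nonneg (convex_Ici z₀) (hdsq.continuous.continuousOn)
        (hdsq.differentiableOn)
      intro x hx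
      rw [interior_Ici] at hx
      rw [hderivsq x]
      have : h z₀ ≤ h x := hmono (le_of_lt hx)
      linarith
    apply not_integrable_of_bddBelow_on hd measurableSet_Ici (Real.volume_Ici)
    intro z hz
    exact hmon self_mem_Ici hz hz
  · by_cases hneg : ∃ z₀, h z₀ < 0
    · -- h negative somewhere : f² grows on a left half-line
      obtain ⟨z₀, hz₀⟩ := hneg
      have hfz₀ : f z₀ ≠ 0 := by
        intro h0
        rw [hh] at hz₀; simp only [h0, zero_mul] at hz₀; exact lt_irrefl 0 hz₀
      have hd : 0 < f z₀ ^ 2 := by positivity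
      -- f² is antitone on (-∞, z₀]
      have hmon : AntitoneOn (fun z => f z ^ 2) (Iic z₀) := by
        apply antitoneOn_of_deriv_nonpos (convex_Iic z₀) (hdsq.continuous.continuousOn)
          (hdsq.differentiableOn)
        intro x hx
        rw [interior_Iic] at hx
        rw [hderivsq x]
        have : h x ≤ h z₀ := hmono (le_of_lt hx)
        linarith
      apply not_integrable_of_bddBelow_on hd measurableSet_Iic (Real.volume_Iic)
      intro z hz
      exact hmon hz self_mem_Iic hz
    · -- h ≡ 0 : f² is a positive constant
      push_neg at hpos hneg
      have hzero : ∀ z, h z = 0 := fun z => le_antisymm (hpos z) (hneg z)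
      have hconst : ∀ x y, f x ^ 2 = f y ^ 2 := by
        apply is_const_of_deriv_eq_zero hdsq
        intro x
        rw [hderivsq x, hzero x]; ring
      obtain ⟨w, hw⟩ : ∃ w, f w ≠ 0 := by
        by_contra hco
        push_neg at hco
        exact hne (funext hco)
      have hd : 0 < f w ^ 2 := by positivity
      apply not_integrable_of_bddBelow_on hd MeasurableSet.univ
        (by simp [Real.volume_univ])
      intro z _
      exact le_of_eq (hconst w z)
end

section
/- Let f : ℝ → ℝ be twice continuously differentiable with f''(z) = Φ(z)·f(z) for a continuous function Φ : ℝ → ℝ satisfying Φ(z) > 0 for all z. If at some point x₀ one has f(x₀) = c > 0 and f'(x₀) ≥ 0, then f(x) ≥ c for all x ≥ x₀. -/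
/-- Monotonicity step: if `f'' = Φ · f` with `Φ` continuous and everywhere positive,
and at some point `x₀` we have `f x₀ = c > 0` and `f' x₀ ≥ 0`, then `f x ≥ c` for
all `x ≥ x₀`. -/
theorem ge_of_ode_pos_initial
    (f Φ : ℝ → ℝ)
    (hf : ContDiff ℝ 2 f)
    (hΦ : Continuous Φ)
    (hΦpos : ∀ z : ℝ, 0 < Φ z)
    (hode : ∀ z : ℝ, deriv (deriv f) z = Φ z * f z)
    (x₀ c : ℝ) (hc : 0 < c)
    (hfx₀ : f x₀ = c)
    (hf'x₀ : 0 ≤ deriv f x₀) :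
    ∀ x : ℝ, x₀ ≤ x → c ≤ f x := by
  have hfc : Continuous f := hf.continuous
  have hf1 : ContDiff ℝ 1 (deriv f) := by
    have h2 : ContDiff ℝ ((1 : ℕ∞) + 1) f := by norm_num; exact hf
    exact (contDiff_succ_iff_deriv.mp h2).2.2
  have hfd : Differentiable ℝ f := hf.differentiable (by norm_num)
  have hfd' : Differentiable ℝ (deriv f) := hf1.differentiable one_ne_zero
  have hf'c : Continuous (deriv f) := hf1.continuous
  intro x hx
  by_contra hlt
  push_neg at hlt
  set S : Set ℝ := {y | y ∈ Set.Icc x₀ x ∧ f y < c} with hS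
  have hSne : S.Nonempty := ⟨x, ⟨hx, le_rfl⟩, hlt⟩
  have hSbdd : BddBelow S := ⟨x₀, fun y hy => hy.1.1⟩
  set t : ℝ := sInf S with ht_def
  have htlb : ∀ y ∈ S, t ≤ y := fun y hy => csInf_le hSbdd hy
  -- t belongs to the closure of S
  have htcl : t ∈ closure S := csInf_mem_closure hSne hSbdd
  have hScl : S ⊆ Set.Icc x₀ x ∩ {y | f y ≤ c} := fun y hy => ⟨hy.1, le_of_lt hy.2⟩
  have hclosed : IsClosed (Set.Icc x₀ x ∩ {y | f y ≤ c}) :=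
    isClosed_Icc.inter (isClosed_le hfc continuous_const)
  have htmem : t ∈ Set.Icc x₀ x ∩ {y | f y ≤ c} := closure_minimal hScl hclosed htcl
  have htx₀ : x₀ ≤ t := htmem.1.1
  have h_below : ∀ y, x₀ ≤ y → y < t → c ≤ f y := by
    intro y hy1 hy2
    by_contra h
    push_neg at h
    have : y ∈ S := ⟨⟨hy1, le_trans hy2.le htmem.1.2⟩, h⟩
    exact absurd (htlb y this) (not_le.mpr hy2)
  -- f ≥ c on [x₀, t]
  have hIcc : ∀ y ∈ Set.Icc x₀ t, c ≤ f y := by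
    rcases eq_or_lt_of_le htx₀ with heq | hne
    · intro y hy
      have : y = x₀ := le_antisymm (heq ▸ hy.2) hy.1
      rw [this, hfx₀]
    · intro y hy
      have hsub : Set.Ico x₀ t ⊆ {z | c ≤ f z} := fun z hz => h_below z hz.1 hz.2
      have hcl : IsClosed {z | c ≤ f z} := isClosed_le continuous_const hfc
      have : Set.Icc x₀ t ⊆ {z | c ≤ f z} := by
        rw [← closure_Ico (ne_of_lt hne)]
        exact hcl.closure_subset_iff.mpr hsub
      exact this hy
  have hft : f t = c := le_antisymm htmem.2 (hIcc t ⟨htx₀, le_rfl⟩)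
  -- deriv f t ≥ 0
  have hf't : 0 ≤ deriv f t := by
    rcases eq_or_lt_of_le htx₀ with heq | hne
    · rw [← heq]; exact hf'x₀
    · have sm' : StrictMonoOn (deriv f) (Set.Icc x₀ t) := by
        apply strictMonoOn_of_deriv_pos (convex_Icc _ _) hf'c.continuousOn
        intro z hz
        rw [interior_Icc] at hz
        rw [hode z]
        exact mul_pos (hΦpos z) (lt_of_lt_of_le hc (hIcc z ⟨hz.1.le, hz.2.le⟩))
      have := sm' (Set.left_mem_Icc.mpr htx₀) (Set.right_mem_Icc.mpr htx₀) hne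
      linarith
  -- f > 0 in a neighborhood of t
  have hev : ∀ᶠ z in nhds t, 0 < f z := by
    have : Set.Ioi (0 : ℝ) ∈ nhds (f t) := Ioi_mem_nhds (by rw [hft]; exact hc)
    exact (hfc.tendsto t).eventually (this)
  obtain ⟨δ, hδ, hball⟩ := Metric.eventually_nhds_iff.mp hev
  set ε := δ / 2 with hε
  have hεpos : 0 < ε := by positivity
  have hfpos : ∀ z ∈ Set.Icc t (t + ε), 0 < f z := by
    intro z hz
    apply hball
    rw [Real.dist_eq, abs_lt]
    constructor <;> [linarith [hz.1]; linarith [hz.2]]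
  have sm' : StrictMonoOn (deriv f) (Set.Icc t (t + ε)) := by
    apply strictMonoOn_of_deriv_pos (convex_Icc _ _) hf'c.continuousOn
    intro z hz
    rw [interior_Icc] at hz
    rw [hode z]
    exact mul_pos (hΦpos z) (hfpos z ⟨hz.1.le, hz.2.le⟩)
  have sm : StrictMonoOn f (Set.Icc t (t + ε)) := by
    apply strictMonoOn_of_deriv_pos (convex_Icc _ _) hfc.continuousOn
    intro z hz
    rw [interior_Icc] at hz
    have := sm' (Set.left_mem_Icc.mpr (by linarith)) ⟨hz.1.le, hz.2.le⟩ hz.1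
    linarith
  obtain ⟨s, hsS, hs⟩ := exists_lt_of_csInf_lt hSne (show sInf S < t + ε by rw [← ht_def]; linarith)
  have hts : t ≤ s := htlb s hsS
  have htne : t ≠ s := by
    intro h
    have h2 := hsS.2
    rw [← h, hft] at h2
    exact lt_irrefl c h2
  have : f t < f s := sm (Set.left_mem_Icc.mpr (by linarith)) ⟨hts, hs.le⟩ (lt_of_le_of_ne hts htne)
  rw [hft] at this
  linarith [hsS.2]
end

section
/- Let μ, μ' ∈ ℝ and λ ∈ ℝ. Suppose h : ℝ → ℂ is a twice continuously differentiable, square-integrable function, not identically zero, satisfying −h''(z) + (1/2)(μ² e^{−2z} + (μ')² e^{2z}) h(z) = λ h(z) for all z ∈ ℝ. Then λ ≥ |μμ'|. -/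
open MeasureTheory

/-- The first eigenvalue of the modified Fourier-mode operator
`Δ̃_{μ,μ'} h = -h'' + (1/2)(μ² e^{-2z} + (μ')² e^{2z}) h` on `L²(ℝ)` is at least `|μμ'|`. -/
theorem eigenvalue_lower_bound_modified
    (μ μ' lam : ℝ) (h : ℝ → ℂ)
    (hh : ContDiff ℝ 2 h)
    (hL2 : Integrable (fun z : ℝ => ‖h z‖ ^ 2) volume)
    (hne : h ≠ 0)
    (hode : ∀ z : ℝ,
      -(deriv (deriv h) z) +
        ((1 / 2 * (μ ^ 2 * Real.exp (-2 * z) + μ' ^ 2 * Real.exp (2 * z)) : ℝ) : ℂ) * h z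
        = (lam : ℂ) * h z) :
    |μ * μ'| ≤ lam := by
  by_contra hcon
  push_neg at hcon
  set V : ℝ → ℝ := fun z => 1 / 2 * (μ ^ 2 * Real.exp (-2 * z) + μ' ^ 2 * Real.exp (2 * z))
    with hVdef
  have hV : ∀ z, |μ * μ'| ≤ V z := by
    intro z
    have e1 : Real.exp (-2 * z) = Real.exp (-z) * Real.exp (-z) := by
      rw [← Real.exp_add]; ring_nf
    have e2 : Real.exp (2 * z) = Real.exp z * Real.exp z := by
      rw [← Real.exp_add]; ring_nf
    have e3 : Real.exp (-z) * Real.exp z = 1 := by rw [← Real.exp_add]; simp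
    have h1 : |μ| ^ 2 = μ ^ 2 := sq_abs μ
    have h2 : |μ'| ^ 2 = μ' ^ 2 := sq_abs μ'
    rw [abs_mul, hVdef]
    simp only [e1, e2]
    have key : (|μ| * Real.exp (-z) - |μ'| * Real.exp z) ^ 2
        = μ ^ 2 * (Real.exp (-z) * Real.exp (-z)) + μ' ^ 2 * (Real.exp z * Real.exp z)
          - 2 * (|μ| * |μ'|) := by
      linear_combination (Real.exp (-z) * Real.exp (-z)) * h1
        + (Real.exp z * Real.exp z) * h2 - 2 * (|μ| * |μ'|) * e3
    nlinarith [sq_nonneg (|μ| * Real.exp (-z) - |μ'| * Real.exp z), key]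
  have hw : ∀ z, 0 ≤ V z - lam := fun z => by linarith [hV z]
  -- differentiability
  have hd1 : Differentiable ℝ h := hh.differentiable (by norm_num)
  have hd2 : Differentiable ℝ (deriv h) := by
    have h11 : ContDiff ℝ (1 + 1 : ℕ) h := by exact_mod_cast hh
    exact ((contDiff_succ_iff_deriv (n := 1)).mp (by norm_num; exact hh)).2.2.differentiable (by norm_num)
  have hu : ∀ z, HasDerivAt (fun z => (h z).re) ((deriv h z).re) z := by
    intro z
    exact
      (Complex.reCLM.hasFDerivAt.comp_hasDerivAt z (hd1 z).hasDerivAt)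
  have hv : ∀ z, HasDerivAt (fun z => (h z).im) ((deriv h z).im) z := by
    intro z
    exact
      (Complex.imCLM.hasFDerivAt.comp_hasDerivAt z (hd1 z).hasDerivAt)
  have hu' : ∀ z, HasDerivAt (fun z => (deriv h z).re) ((deriv (deriv h) z).re) z := by
    intro z
    exact
      (Complex.reCLM.hasFDerivAt.comp_hasDerivAt z (hd2 z).hasDerivAt)
  have hv' : ∀ z, HasDerivAt (fun z => (deriv h z).im) ((deriv (deriv h) z).im) z := by
    intro z
    exact
      (Complex.imCLM.hasFDerivAt.comp_hasDerivAt z (hd2 z).hasDerivAt)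
  set g : ℝ → ℝ := fun z => (h z).re * (h z).re + (h z).im * (h z).im with hgdef
  set G : ℝ → ℝ := fun z =>
    2 * ((h z).re * (deriv h z).re) + 2 * ((h z).im * (deriv h z).im) with hGdef
  have hgG : ∀ z, HasDerivAt g (G z) z := by
    intro z
    have := (((hu z).mul (hu z)).add ((hv z).mul (hv z)))
    refine this.congr_deriv ?_
    simp only [hGdef]; ring
  -- second derivative of g
  have hode' : ∀ z, deriv (deriv h) z = ((V z - lam : ℝ) : ℂ) * h z := by
    intro z
    have := hode z
    push_cast
    linear_combination -this
  have hGD : ∀ z, HasDerivAt G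
      (2 * ((deriv h z).re ^ 2 + (deriv h z).im ^ 2) + 2 * (V z - lam) * g z) z := by
    intro z
    have h1 := ((((hu z).mul (hu' z)).const_mul 2).add (((hv z).mul (hv' z)).const_mul 2))
    refine h1.congr_deriv ?_
    have hre : (deriv (deriv h) z).re = (V z - lam) * (h z).re := by
      rw [hode']; simp [Complex.mul_re]
    have him : (deriv (deriv h) z).im = (V z - lam) * (h z).im := by
      rw [hode']; simp [Complex.mul_im]
    rw [hre, him, hgdef]
    ring
  have hGderiv : ∀ z, deriv G z =
      2 * ((deriv h z).re ^ 2 + (deriv h z).im ^ 2) + 2 * (V z - lam) * g z :=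
    fun z => (hGD z).deriv
  have hGmono : Monotone G := by
    apply monotone_of_deriv_nonneg (fun z => (hGD z).differentiableAt)
    intro z
    rw [hGderiv z]
    have hg0 : 0 ≤ g z := add_nonneg (mul_self_nonneg _) (mul_self_nonneg _)
    nlinarith [hw z, sq_nonneg (deriv h z).re, sq_nonneg (deriv h z).im]
  -- a point where h is nonzero
  obtain ⟨a, ha⟩ : ∃ a, h a ≠ 0 := by
    by_contra hc
    push_neg at hc
    exact hne (funext hc)
  have hga : 0 < g a := by
    have := Complex.normSq_pos.mpr ha
    simpa [Complex.normSq_apply, hgdef] using this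
  -- integrability of g
  have hgInt : Integrable g volume := by
    have : (fun z : ℝ => ‖h z‖ ^ 2) = g := by
      funext z
      rw [hgdef]
      simp [← Complex.normSq_eq_norm_sq, Complex.normSq_apply]
    rwa [this] at hL2
  have hgdiff : Differentiable ℝ g := fun z => (hgG z).differentiableAt
  -- g ≥ g a on a set of infinite measure
  have key : ∃ s : Set ℝ, volume s = ⊤ ∧ ∀ z ∈ s, g a ≤ g z := by
    rcases le_or_gt 0 (G a) with hGa | hGa
    · refine ⟨Set.Ici a, Real.volume_Ici, ?_⟩
      have hmono : MonotoneOn g (Set.Ici a) := by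
        apply monotoneOn_of_deriv_nonneg (convex_Ici a) hgdiff.continuous.continuousOn
          (fun z _ => hgdiff z |>.differentiableWithinAt)
        intro z hz
        rw [(hgG z).deriv]
        rw [interior_Ici] at hz
        exact le_trans hGa (hGmono (le_of_lt hz))
      exact fun z hz => hmono (Set.self_mem_Ici) hz hz
    · refine ⟨Set.Iic a, Real.volume_Iic, ?_⟩
      have hmono : AntitoneOn g (Set.Iic a) := by
        apply antitoneOn_of_deriv_nonpos (convex_Iic a) hgdiff.continuous.continuousOn
          (fun z _ => hgdiff z |>.differentiableWithinAt)
        intro z hz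
        rw [(hgG z).deriv]
        rw [interior_Iic] at hz
        exact le_trans (hGmono (le_of_lt hz)) (le_of_lt hGa)
      exact fun z hz => hmono hz (Set.self_mem_Iic) hz
  obtain ⟨s, hs, hsg⟩ := key
  have h1 : volume s ≤ volume {z : ℝ | g a ≤ g z} :=
    measure_mono (fun z hz => hsg z hz)
  have h2 : volume {z : ℝ | g a ≤ g z} < ⊤ := hgInt.measure_ge_lt_top hga
  rw [hs] at h1
  exact absurd (lt_of_le_of_lt h1 h2) (lt_irrefl ⊤)
end

section
/- Let μ, μ' ∈ ℝ with |μμ'| > 8, and let λ ∈ ℝ. Suppose f, g, h : ℝ → ℂ are smooth functions lying in the Schwartz-type class 𝒮, not all identically zero, satisfying for all z ∈ ℝ the coupled system: −h'' + (μ²e^{−2z} + (μ')²e^{2z})h = λ²h − 2iμe^{−z}f + 2iμ'e^{z}g; −g'' + (μ²e^{−2z} + (μ')²e^{2z})g = (λ²−1)g − 2iμ'e^{z}h; −f'' + (μ²e^{−2z} + (μ')²e^{2z})f = (λ²−1)f + 2iμe^{−z}h. Then λ² > 1. -/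
open Complex Filter

/-- The Schwartz-type class `𝒮`: functions `u : ℝ → ℂ` such that `e^{nz} u^{(m)}(z)`
is bounded on `ℝ` for every `n ∈ ℤ` and every `m ≥ 0`. -/
def SchwartzType (u : ℝ → ℂ) : Prop :=
  ∀ (n : ℤ) (m : ℕ), ∃ C : ℝ, ∀ z : ℝ, Real.exp ((n : ℝ) * z) * ‖iteratedDeriv m u z‖ ≤ C

lemma hasDerivAt_normSq_comp {u : ℝ → ℂ} {u' : ℂ} {z : ℝ} (hu : HasDerivAt u u' z) :
    HasDerivAt (fun t => Complex.normSq (u t))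
      (2 * ((starRingEnd ℂ) (u z) * u').re) z := by
  have hre : HasDerivAt (fun t => (u t).re) u'.re z :=
    Complex.reCLM.hasFDerivAt.comp_hasDerivAt z hu
  have him : HasDerivAt (fun t => (u t).im) u'.im z :=
    Complex.imCLM.hasFDerivAt.comp_hasDerivAt z hu
  have h2 : (fun t => Complex.normSq (u t))
      = fun t => (u t).re * (u t).re + (u t).im * (u t).im := by
    funext t; simp [Complex.normSq_apply]
  rw [h2]
  refine ((hre.mul hre).add (him.mul him)).congr_deriv ?_
  simp [Complex.mul_re, Complex.conj_re, Complex.conj_im]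
  ring

lemma hasDerivAt_conj_mul_re {u v : ℝ → ℂ} {u' v' : ℂ} {z : ℝ}
    (hu : HasDerivAt u u' z) (hv : HasDerivAt v v' z) :
    HasDerivAt (fun t => ((starRingEnd ℂ) (u t) * v t).re)
      (((starRingEnd ℂ) u' * v z).re + ((starRingEnd ℂ) (u z) * v').re) z := by
  have hre : HasDerivAt (fun t => (u t).re) u'.re z :=
    Complex.reCLM.hasFDerivAt.comp_hasDerivAt z hu
  have him : HasDerivAt (fun t => (u t).im) u'.im z :=
    Complex.imCLM.hasFDerivAt.comp_hasDerivAt z hu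
  have hre' : HasDerivAt (fun t => (v t).re) v'.re z :=
    Complex.reCLM.hasFDerivAt.comp_hasDerivAt z hv
  have him' : HasDerivAt (fun t => (v t).im) v'.im z :=
    Complex.imCLM.hasFDerivAt.comp_hasDerivAt z hv
  have h2 : (fun t => ((starRingEnd ℂ) (u t) * v t).re)
      = fun t => (u t).re * (v t).re + (u t).im * (v t).im := by
    funext t; simp [Complex.mul_re, Complex.conj_re, Complex.conj_im]
  rw [h2]
  refine ((hre.mul hre').add (him.mul him')).congr_deriv ?_
  simp [Complex.mul_re, Complex.conj_re, Complex.conj_im]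
  ring

/-- Second derivative test at a global maximum. -/
lemma second_deriv_test_max {w P : ℝ → ℝ} {z₀ L : ℝ}
    (hw : ∀ z, HasDerivAt w (P z) z) (hP : HasDerivAt P L z₀)
    (hmax : ∀ y, w y ≤ w z₀) : L ≤ 0 := by
  by_contra hL
  push_neg at hL
  have hloc : IsLocalMax w z₀ := Filter.Eventually.of_forall hmax
  have hP0 : P z₀ = 0 := by
    have h := hloc.deriv_eq_zero
    rwa [(hw z₀).deriv] at h
  have hslope : Tendsto (slope P z₀) (nhdsWithin z₀ {z₀}ᶜ) (nhds L) :=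
    hasDerivAt_iff_tendsto_slope.1 hP
  have h3 : ∀ᶠ z in nhdsWithin z₀ (Set.Ioi z₀), 0 < slope P z₀ z :=
    (hslope.eventually (eventually_gt_nhds hL)).filter_mono
      (nhdsWithin_mono _ fun x hx => ne_of_gt hx)
  have h1 : ∀ᶠ z in nhdsWithin z₀ (Set.Ioi z₀), 0 < P z := by
    filter_upwards [h3, self_mem_nhdsWithin] with z hz hz'
    rw [slope_def_field, hP0, sub_zero] at hz
    have hzz : 0 < z - z₀ := sub_pos.2 hz'
    have := mul_pos hz hzz
    rwa [div_mul_cancel₀ _ hzz.ne'] at this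
  obtain ⟨b, hb, hsub⟩ := mem_nhdsGT_iff_exists_Ioo_subset.1 h1
  set c := (z₀ + b) / 2 with hc
  have hc1 : z₀ < c := by simp only [hc]; linarith [Set.mem_Ioi.1 hb]
  have hc2 : c < b := by simp only [hc]; linarith [Set.mem_Ioi.1 hb]
  have hmono : StrictMonoOn w (Set.Icc z₀ c) := by
    apply strictMonoOn_of_deriv_pos (convex_Icc _ _)
      (fun z _ => (hw z).continuousAt.continuousWithinAt)
    intro z hz
    rw [interior_Icc] at hz
    rw [(hw z).deriv]
    exact hsub ⟨hz.1, lt_trans hz.2 hc2⟩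
  have : w z₀ < w c :=
    hmono (Set.left_mem_Icc.2 hc1.le) (Set.right_mem_Icc.2 hc1.le) hc1
  exact absurd (hmax c) (not_le.2 this)

lemma schwartz_normSq_tendsto {u : ℝ → ℂ} (hu : SchwartzType u) :
    Tendsto (fun z => Complex.normSq (u z)) (cocompact ℝ) (nhds 0) := by
  have key : ∀ (s : ℤ) (l : Filter ℝ),
      Tendsto (fun z => Real.exp (-((s:ℝ) * z))) l (nhds 0) →
      Tendsto (fun z => Complex.normSq (u z)) l (nhds 0) := by
    intro s l hexp
    obtain ⟨C, hC⟩ := hu s 0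
    have hC0 : 0 ≤ C := le_trans (by positivity) (hC 0)
    have hb : ∀ z, ‖u z‖ ≤ C * Real.exp (-((s:ℝ) * z)) := by
      intro z
      have h1 := hC z
      rw [iteratedDeriv_zero] at h1
      have h2 : Real.exp ((s:ℝ)*z) * Real.exp (-((s:ℝ)*z)) = 1 := by
        rw [← Real.exp_add]; simp
      calc ‖u z‖ = Real.exp ((s:ℝ)*z) * ‖u z‖ * Real.exp (-((s:ℝ)*z)) := by
            rw [mul_comm (Real.exp ((s:ℝ)*z)) ‖u z‖, mul_assoc, h2, mul_one]
        _ ≤ C * Real.exp (-((s:ℝ)*z)) :=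
            mul_le_mul_of_nonneg_right h1 (Real.exp_pos _).le
    have hn : Tendsto (fun z => ‖u z‖) l (nhds 0) := by
      apply squeeze_zero (fun z => norm_nonneg _) hb
      simpa using hexp.const_mul C
    have := hn.mul hn
    rw [mul_zero] at this
    refine this.congr fun z => ?_
    simp [Complex.normSq_eq_norm_sq, sq]
  rw [cocompact_eq_atBot_atTop, Filter.tendsto_sup]
  constructor
  · exact key (-1) _ (by simpa using Real.tendsto_exp_atBot)
  · exact key 1 _ (by simpa using Real.tendsto_exp_neg_atTop_nhds_zero)


lemma cross_re_bound (r : ℝ) (F H : ℂ) :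
    |(2 * Complex.I * ((r : ℝ) : ℂ) * ((starRingEnd ℂ) F * H)).re|
      ≤ 2 * |r| * (‖F‖ * ‖H‖) := by
  refine le_trans (Complex.abs_re_le_norm _) (le_of_eq ?_)
  simp only [norm_mul, Complex.norm_I, Complex.norm_real, Complex.norm_conj, Complex.norm_two, Real.norm_eq_abs]
  ring

set_option maxHeartbeats 1000000 in
lemma final_arith {p q a b c lam2 x1 x2 x3 x4 : ℝ}
    (hpq : 8 < p * q) (hl : lam2 ≤ 1)
    (hx1 : |x1| ≤ 2 * p * (a * c)) (hx2 : |x2| ≤ 2 * q * (b * c))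
    (hx3 : |x3| ≤ 2 * p * (c * a)) (hx4 : |x4| ≤ 2 * q * (c * b))
    (hpos : 0 < a ^ 2 + b ^ 2 + c ^ 2)
    (hS : (p ^ 2 + q ^ 2 + 1 - lam2) * a ^ 2 - x1
        + ((p ^ 2 + q ^ 2 + 1 - lam2) * b ^ 2 + x2)
        + ((p ^ 2 + q ^ 2 - lam2) * c ^ 2 + x3 - x4) ≤ 0) : False := by
  obtain ⟨hb1l, hb1r⟩ := abs_le.1 hx1
  obtain ⟨hb2l, hb2r⟩ := abs_le.1 hx2
  obtain ⟨hb3l, hb3r⟩ := abs_le.1 hx3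
  obtain ⟨hb4l, hb4r⟩ := abs_le.1 hx4
  have hA := sq_nonneg a
  have hB := sq_nonneg b
  have hC := sq_nonneg c
  have hpq8 : 0 ≤ p * q - 8 := by linarith
  have key1 : 8 * (p * (a * c)) ≤ 16 * a ^ 2 + p ^ 2 * c ^ 2 := by
    nlinarith [sq_nonneg (4 * a - p * c)]
  have key2 : 8 * (q * (b * c)) ≤ 16 * b ^ 2 + q ^ 2 * c ^ 2 := by
    nlinarith [sq_nonneg (4 * b - q * c)]
  have k3a : 2 * (p * q * a ^ 2) ≤ (p ^ 2 + q ^ 2) * a ^ 2 := by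
    nlinarith [sq_nonneg ((p - q) * a)]
  have k3b : 2 * (p * q * b ^ 2) ≤ (p ^ 2 + q ^ 2) * b ^ 2 := by
    nlinarith [sq_nonneg ((p - q) * b)]
  have k3c : 2 * (p * q * c ^ 2) ≤ (p ^ 2 + q ^ 2) * c ^ 2 := by
    nlinarith [sq_nonneg ((p - q) * c)]
  have k5a : 0 ≤ (p * q - 8) * a ^ 2 := mul_nonneg hpq8 hA
  have k5b : 0 ≤ (p * q - 8) * b ^ 2 := mul_nonneg hpq8 hB
  have k5c : 0 ≤ (p * q - 8) * c ^ 2 := mul_nonneg hpq8 hC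
  have h8 : 0 ≤ (1 - lam2) * (a ^ 2 + b ^ 2) := mul_nonneg (by linarith) (by positivity)
  have h9 : 0 ≤ (1 - lam2) * c ^ 2 := mul_nonneg (by linarith) hC
  linarith

set_option maxHeartbeats 2000000 in
/-- The `(μ,μ')`-Fourier mode of the coexact eigenvalue equation `∗dξ = λξ` on a
Solv-manifold: if `|μμ'| > 8` and `(f,g,h)` is a nonzero solution of the coupled
system in the Schwartz-type class, then `λ² > 1`. -/
theorem coexact_mode_eigenvalue_bound
    (μ μ' lam : ℝ) (hμ : 8 < |μ * μ'|)
    (f g h : ℝ → ℂ)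
    (hfs : ContDiff ℝ (⊤ : ℕ∞) f) (hgs : ContDiff ℝ (⊤ : ℕ∞) g) (hhs : ContDiff ℝ (⊤ : ℕ∞) h)
    (hfS : SchwartzType f) (hgS : SchwartzType g) (hhS : SchwartzType h)
    (hne : ¬ (f = 0 ∧ g = 0 ∧ h = 0))
    (heqh : ∀ z : ℝ,
      -(deriv (deriv h) z) +
        ((μ ^ 2 * Real.exp (-2 * z) + μ' ^ 2 * Real.exp (2 * z) : ℝ) : ℂ) * h z
        = ((lam ^ 2 : ℝ) : ℂ) * h z
            - 2 * Complex.I * (μ : ℂ) * (Real.exp (-z) : ℝ) * f z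
            + 2 * Complex.I * (μ' : ℂ) * (Real.exp z : ℝ) * g z)
    (heqg : ∀ z : ℝ,
      -(deriv (deriv g) z) +
        ((μ ^ 2 * Real.exp (-2 * z) + μ' ^ 2 * Real.exp (2 * z) : ℝ) : ℂ) * g z
        = ((lam ^ 2 - 1 : ℝ) : ℂ) * g z
            - 2 * Complex.I * (μ' : ℂ) * (Real.exp z : ℝ) * h z)
    (heqf : ∀ z : ℝ,
      -(deriv (deriv f) z) +
        ((μ ^ 2 * Real.exp (-2 * z) + μ' ^ 2 * Real.exp (2 * z) : ℝ) : ℂ) * f z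
        = ((lam ^ 2 - 1 : ℝ) : ℂ) * f z
            + 2 * Complex.I * (μ : ℂ) * (Real.exp (-z) : ℝ) * h z) :
    1 < lam ^ 2 := by
  by_contra hlt
  push_neg at hlt
  have hD : ∀ (u : ℝ → ℂ), ContDiff ℝ (⊤ : ℕ∞) u →
      (∀ z, HasDerivAt u (deriv u z) z) ∧ (∀ z, HasDerivAt (deriv u) (deriv (deriv u) z) z) := by
    intro u hu
    have hiter := contDiff_infty_iff_deriv.mp (hu.of_le (by simp))
    have h2 := contDiff_infty_iff_deriv.mp hiter.2
    exact ⟨fun z => (hiter.1 z).hasDerivAt, fun z => (h2.1 z).hasDerivAt⟩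
  obtain ⟨hf1, hf2⟩ := hD f hfs
  obtain ⟨hg1, hg2⟩ := hD g hgs
  obtain ⟨hh1, hh2⟩ := hD h hhs
  set w : ℝ → ℝ := fun z =>
      Complex.normSq (f z) + Complex.normSq (g z) + Complex.normSq (h z) with hwdef
  set P : ℝ → ℝ := fun z => 2 * ((starRingEnd ℂ) (f z) * deriv f z).re
      + 2 * ((starRingEnd ℂ) (g z) * deriv g z).re
      + 2 * ((starRingEnd ℂ) (h z) * deriv h z).re with hPdef
  have hwP : ∀ z, HasDerivAt w (P z) z := fun z =>
    ((hasDerivAt_normSq_comp (hf1 z)).add (hasDerivAt_normSq_comp (hg1 z))).add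
      (hasDerivAt_normSq_comp (hh1 z))
  have hne' : ∃ z, 0 < w z := by
    by_contra h0
    push_neg at h0
    have hz : ∀ z, Complex.normSq (f z) = 0 ∧ Complex.normSq (g z) = 0 ∧
        Complex.normSq (h z) = 0 := by
      intro z
      have h1 := h0 z
      have n1 := Complex.normSq_nonneg (f z)
      have n2 := Complex.normSq_nonneg (g z)
      have n3 := Complex.normSq_nonneg (h z)
      simp only [hwdef] at h1
      exact ⟨by linarith, by linarith, by linarith⟩
    exact hne ⟨funext fun z => Complex.normSq_eq_zero.1 (hz z).1,
      funext fun z => Complex.normSq_eq_zero.1 (hz z).2.1,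
      funext fun z => Complex.normSq_eq_zero.1 (hz z).2.2⟩
  obtain ⟨z₁, hz₁⟩ := hne'
  have hwcont : Continuous w := by
    rw [continuous_iff_continuousAt]
    intro z
    exact (hwP z).continuousAt
  have htend : Tendsto w (cocompact ℝ) (nhds 0) := by
    have := ((schwartz_normSq_tendsto hfS).add (schwartz_normSq_tendsto hgS)).add
      (schwartz_normSq_tendsto hhS)
    simpa using this
  have hev : ∀ᶠ x in cocompact ℝ, w x ≤ w z₁ :=
    (htend.eventually (eventually_lt_nhds hz₁)).mono fun x hx => hx.le
  obtain ⟨z₀, hmax⟩ := hwcont.exists_forall_ge' z₁ hev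
  have hPd : HasDerivAt P
      (2 * (((starRingEnd ℂ) (deriv f z₀) * deriv f z₀).re
          + ((starRingEnd ℂ) (f z₀) * deriv (deriv f) z₀).re)
      + 2 * (((starRingEnd ℂ) (deriv g z₀) * deriv g z₀).re
          + ((starRingEnd ℂ) (g z₀) * deriv (deriv g) z₀).re)
      + 2 * (((starRingEnd ℂ) (deriv h z₀) * deriv h z₀).re
          + ((starRingEnd ℂ) (h z₀) * deriv (deriv h) z₀).re)) z₀ := by
    rw [hPdef]
    exact (((hasDerivAt_conj_mul_re (hf1 z₀) (hf2 z₀)).const_mul 2).add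
      ((hasDerivAt_conj_mul_re (hg1 z₀) (hg2 z₀)).const_mul 2)).add
      ((hasDerivAt_conj_mul_re (hh1 z₀) (hh2 z₀)).const_mul 2)
  have hL := second_deriv_test_max hwP hPd hmax
  have hnn : ∀ wz : ℂ, 0 ≤ ((starRingEnd ℂ) wz * wz).re := by
    intro wz
    have hh2 : ((starRingEnd ℂ) wz * wz).re = Complex.normSq wz := by
      rw [← Complex.normSq_eq_conj_mul_self, Complex.ofReal_re]
    rw [hh2]; exact Complex.normSq_nonneg _
  have hS : ((starRingEnd ℂ) (f z₀) * deriv (deriv f) z₀).re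
      + ((starRingEnd ℂ) (g z₀) * deriv (deriv g) z₀).re
      + ((starRingEnd ℂ) (h z₀) * deriv (deriv h) z₀).re ≤ 0 := by
    have n1 := hnn (deriv f z₀); have n2 := hnn (deriv g z₀); have n3 := hnn (deriv h z₀)
    linarith
  -- ODE substitutions
  have hVr : μ ^ 2 * Real.exp (-2 * z₀) + μ' ^ 2 * Real.exp (2 * z₀)
      = (|μ| * Real.exp (-z₀)) ^ 2 + (|μ'| * Real.exp z₀) ^ 2 := by
    rw [show (-2 : ℝ) * z₀ = (-z₀) + (-z₀) by ring, show (2 : ℝ) * z₀ = z₀ + z₀ by ring,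
      Real.exp_add, Real.exp_add, mul_pow, mul_pow, _root_.sq_abs, _root_.sq_abs]
    ring
  have hf'' : deriv (deriv f) z₀
      = ((μ ^ 2 * Real.exp (-2 * z₀) + μ' ^ 2 * Real.exp (2 * z₀) : ℝ) : ℂ) * f z₀
        - ((lam ^ 2 - 1 : ℝ) : ℂ) * f z₀
        - 2 * Complex.I * ((μ * Real.exp (-z₀) : ℝ) : ℂ) * h z₀ := by
    linear_combination (norm := (push_cast; ring1)) -(heqf z₀)
  have hg'' : deriv (deriv g) z₀
      = ((μ ^ 2 * Real.exp (-2 * z₀) + μ' ^ 2 * Real.exp (2 * z₀) : ℝ) : ℂ) * g z₀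
        - ((lam ^ 2 - 1 : ℝ) : ℂ) * g z₀
        + 2 * Complex.I * ((μ' * Real.exp z₀ : ℝ) : ℂ) * h z₀ := by
    linear_combination (norm := (push_cast; ring1)) -(heqg z₀)
  have hh'' : deriv (deriv h) z₀
      = ((μ ^ 2 * Real.exp (-2 * z₀) + μ' ^ 2 * Real.exp (2 * z₀) : ℝ) : ℂ) * h z₀
        - ((lam ^ 2 : ℝ) : ℂ) * h z₀
        + 2 * Complex.I * ((μ * Real.exp (-z₀) : ℝ) : ℂ) * f z₀
        - 2 * Complex.I * ((μ' * Real.exp z₀ : ℝ) : ℂ) * g z₀ := by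
    linear_combination (norm := (push_cast; ring1)) -(heqh z₀)
  rw [hVr] at hf'' hg'' hh''
  have hrf : ((starRingEnd ℂ) (f z₀) * deriv (deriv f) z₀).re
      = ((|μ| * Real.exp (-z₀)) ^ 2 + (|μ'| * Real.exp z₀) ^ 2 + 1 - lam ^ 2)
          * Complex.normSq (f z₀)
        - (2 * Complex.I * ((μ * Real.exp (-z₀) : ℝ) : ℂ)
            * ((starRingEnd ℂ) (f z₀) * h z₀)).re := by
    have hc : (starRingEnd ℂ) (f z₀) * deriv (deriv f) z₀
        = ((((|μ| * Real.exp (-z₀)) ^ 2 + (|μ'| * Real.exp z₀) ^ 2 + 1 - lam ^ 2) : ℝ) : ℂ)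
            * ((Complex.normSq (f z₀) : ℝ) : ℂ)
          - 2 * Complex.I * ((μ * Real.exp (-z₀) : ℝ) : ℂ)
            * ((starRingEnd ℂ) (f z₀) * h z₀) := by
      rw [hf'', Complex.normSq_eq_conj_mul_self]
      push_cast
      ring
    rw [hc, Complex.sub_re, ← Complex.ofReal_mul, Complex.ofReal_re]
  have hrg : ((starRingEnd ℂ) (g z₀) * deriv (deriv g) z₀).re
      = ((|μ| * Real.exp (-z₀)) ^ 2 + (|μ'| * Real.exp z₀) ^ 2 + 1 - lam ^ 2)
          * Complex.normSq (g z₀)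
        + (2 * Complex.I * ((μ' * Real.exp z₀ : ℝ) : ℂ)
            * ((starRingEnd ℂ) (g z₀) * h z₀)).re := by
    have hc : (starRingEnd ℂ) (g z₀) * deriv (deriv g) z₀
        = ((((|μ| * Real.exp (-z₀)) ^ 2 + (|μ'| * Real.exp z₀) ^ 2 + 1 - lam ^ 2) : ℝ) : ℂ)
            * ((Complex.normSq (g z₀) : ℝ) : ℂ)
          + 2 * Complex.I * ((μ' * Real.exp z₀ : ℝ) : ℂ)
            * ((starRingEnd ℂ) (g z₀) * h z₀) := by
      rw [hg'', Complex.normSq_eq_conj_mul_self]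
      push_cast
      ring
    rw [hc, Complex.add_re, ← Complex.ofReal_mul, Complex.ofReal_re]
  have hrh : ((starRingEnd ℂ) (h z₀) * deriv (deriv h) z₀).re
      = ((|μ| * Real.exp (-z₀)) ^ 2 + (|μ'| * Real.exp z₀) ^ 2 - lam ^ 2)
          * Complex.normSq (h z₀)
        + (2 * Complex.I * ((μ * Real.exp (-z₀) : ℝ) : ℂ)
            * ((starRingEnd ℂ) (h z₀) * f z₀)).re
        - (2 * Complex.I * ((μ' * Real.exp z₀ : ℝ) : ℂ)
            * ((starRingEnd ℂ) (h z₀) * g z₀)).re := by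
    have hc : (starRingEnd ℂ) (h z₀) * deriv (deriv h) z₀
        = ((((|μ| * Real.exp (-z₀)) ^ 2 + (|μ'| * Real.exp z₀) ^ 2 - lam ^ 2) : ℝ) : ℂ)
            * ((Complex.normSq (h z₀) : ℝ) : ℂ)
          + 2 * Complex.I * ((μ * Real.exp (-z₀) : ℝ) : ℂ)
            * ((starRingEnd ℂ) (h z₀) * f z₀)
          - 2 * Complex.I * ((μ' * Real.exp z₀ : ℝ) : ℂ)
            * ((starRingEnd ℂ) (h z₀) * g z₀) := by
      rw [hh'', Complex.normSq_eq_conj_mul_self]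
      push_cast
      ring
    rw [hc, Complex.sub_re, Complex.add_re, ← Complex.ofReal_mul, Complex.ofReal_re]
  -- bounds on the cross terms
  have habs1 : |μ * Real.exp (-z₀)| = |μ| * Real.exp (-z₀) := by
    rw [abs_mul, abs_of_pos (Real.exp_pos _)]
  have habs2 : |μ' * Real.exp z₀| = |μ'| * Real.exp z₀ := by
    rw [abs_mul, abs_of_pos (Real.exp_pos _)]
  have hb1 := cross_re_bound (μ * Real.exp (-z₀)) (f z₀) (h z₀)
  have hb2 := cross_re_bound (μ' * Real.exp z₀) (g z₀) (h z₀)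
  have hb3 := cross_re_bound (μ * Real.exp (-z₀)) (h z₀) (f z₀)
  have hb4 := cross_re_bound (μ' * Real.exp z₀) (h z₀) (g z₀)
  rw [habs1] at hb1 hb3
  rw [habs2] at hb2 hb4
  -- positivity of the value at the max
  have hw0 : 0 < Complex.normSq (f z₀) + Complex.normSq (g z₀) + Complex.normSq (h z₀) := by
    have hcmp := lt_of_lt_of_le hz₁ (hmax z₁)
    simpa [hwdef] using hcmp
  -- final arithmetic
  have hE : Real.exp (-z₀) * Real.exp z₀ = 1 := by
    rw [← Real.exp_add]; simp
  have hpq : (|μ| * Real.exp (-z₀)) * (|μ'| * Real.exp z₀) = |μ| * |μ'| := by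
    calc (|μ| * Real.exp (-z₀)) * (|μ'| * Real.exp z₀)
        = (|μ| * |μ'|) * (Real.exp (-z₀) * Real.exp z₀) := by ring
      _ = |μ| * |μ'| := by rw [hE, mul_one]
  have hQ : 8 < |μ| * |μ'| := by rwa [← abs_mul]
  have hNf : Complex.normSq (f z₀) = ‖f z₀‖ ^ 2 := Complex.normSq_eq_norm_sq _
  have hNg : Complex.normSq (g z₀) = ‖g z₀‖ ^ 2 := Complex.normSq_eq_norm_sq _
  have hNh : Complex.normSq (h z₀) = ‖h z₀‖ ^ 2 := Complex.normSq_eq_norm_sq _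
  rw [hrf, hrg, hrh, hNf, hNg, hNh] at hS
  rw [hNf, hNg, hNh] at hw0
  have hQ' : 8 < (|μ| * Real.exp (-z₀)) * (|μ'| * Real.exp z₀) := by rw [hpq]; exact hQ
  exact final_arith hQ' hlt hb1 hb2 hb3 hb4 hw0 hS
end

section
/- Fix λ ∈ ℝ and smooth functions f, g, h : ℝ³ → ℝ (coordinates (x,y,z)) satisfying the first-order system: −g_z + g + e^{z}h_y = λf; f_z + f − e^{−z}h_x = λg; e^{−z}g_x − e^{z}f_y = λh; together with the coclosedness condition e^{−z}f_x + e^{z}g_y + h_z = 0. Define the Solv Laplacian on functions by Δu = −(e^{−2z}u_{xx} + e^{2z}u_{yy} + u_{zz}). Then the following second-order equations hold: Δh = λ²h − 2e^{−z}f_x + 2e^{z}g_y; Δg = (λ²−1)g − 2e^{z}h_y; Δf = (λ²−1)f + 2e^{−z}h_x. -/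
/-- Partial derivative in the first (`x`) variable. -/
noncomputable def px (u : ℝ → ℝ → ℝ → ℝ) : ℝ → ℝ → ℝ → ℝ :=
  fun x y z => deriv (fun t => u t y z) x

/-- Partial derivative in the second (`y`) variable. -/
noncomputable def py (u : ℝ → ℝ → ℝ → ℝ) : ℝ → ℝ → ℝ → ℝ :=
  fun x y z => deriv (fun t => u x t z) y

/-- Partial derivative in the third (`z`) variable. -/
noncomputable def pz (u : ℝ → ℝ → ℝ → ℝ) : ℝ → ℝ → ℝ → ℝ :=
  fun x y z => deriv (fun t => u x y t) z

/-- The Solv Laplacian on functions: `Δu = -(e^{-2z} u_xx + e^{2z} u_yy + u_zz)`. -/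
noncomputable def solvLap (u : ℝ → ℝ → ℝ → ℝ) : ℝ → ℝ → ℝ → ℝ :=
  fun x y z =>
    -(Real.exp (-2 * z) * px (px u) x y z + Real.exp (2 * z) * py (py u) x y z
      + pz (pz u) x y z)

namespace SolvAux

/-- Uncurried version of a function of three real variables. -/
def uncur (u : ℝ → ℝ → ℝ → ℝ) : ℝ × ℝ × ℝ → ℝ := fun p => u p.1 p.2.1 p.2.2

lemma hasDerivAt_s1 (F : ℝ × ℝ × ℝ → ℝ) (x y z : ℝ) (hF : DifferentiableAt ℝ F (x, y, z)) : HasDerivAt (fun t => F (t, y, z)) (fderiv ℝ F (x, y, z) (1, 0, 0)) x := by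
  have hline : HasDerivAt (fun t : ℝ => ((t, y, z) : ℝ × ℝ × ℝ)) ((1 : ℝ), (0 : ℝ), (0 : ℝ)) x :=
    (hasDerivAt_id x).prodMk (hasDerivAt_const x (y, z))
  exact hF.hasFDerivAt.comp_hasDerivAt x hline

lemma hasDerivAt_s2 (F : ℝ × ℝ × ℝ → ℝ) (x y z : ℝ) (hF : DifferentiableAt ℝ F (x, y, z)) : HasDerivAt (fun t => F (x, t, z)) (fderiv ℝ F (x, y, z) (0, 1, 0)) y := by
  have hline : HasDerivAt (fun t : ℝ => ((x, t, z) : ℝ × ℝ × ℝ)) ((0 : ℝ), (1 : ℝ), (0 : ℝ)) y :=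
    (hasDerivAt_const y x).prodMk ((hasDerivAt_id y).prodMk (hasDerivAt_const y z))
  exact hF.hasFDerivAt.comp_hasDerivAt y hline

lemma hasDerivAt_s3 (F : ℝ × ℝ × ℝ → ℝ) (x y z : ℝ) (hF : DifferentiableAt ℝ F (x, y, z)) : HasDerivAt (fun t => F (x, y, t)) (fderiv ℝ F (x, y, z) (0, 0, 1)) z := by
  have hline : HasDerivAt (fun t : ℝ => ((x, y, t) : ℝ × ℝ × ℝ)) ((0 : ℝ), (0 : ℝ), (1 : ℝ)) z :=
    (hasDerivAt_const z x).prodMk ((hasDerivAt_const z y).prodMk (hasDerivAt_id z))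
  exact hF.hasFDerivAt.comp_hasDerivAt z hline

variable {u : ℝ → ℝ → ℝ → ℝ}

lemma px_eq (hu : ContDiff ℝ (⊤ : ℕ∞) (uncur u)) (x y z : ℝ) :
    px u x y z = fderiv ℝ (uncur u) (x, y, z) (1, 0, 0) :=
  (hasDerivAt_s1 (uncur u) x y z ((hu.differentiable (by simp)) _)).deriv

lemma py_eq (hu : ContDiff ℝ (⊤ : ℕ∞) (uncur u)) (x y z : ℝ) :
    py u x y z = fderiv ℝ (uncur u) (x, y, z) (0, 1, 0) :=
  (hasDerivAt_s2 (uncur u) x y z ((hu.differentiable (by simp)) _)).deriv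

lemma pz_eq (hu : ContDiff ℝ (⊤ : ℕ∞) (uncur u)) (x y z : ℝ) :
    pz u x y z = fderiv ℝ (uncur u) (x, y, z) (0, 0, 1) :=
  (hasDerivAt_s3 (uncur u) x y z ((hu.differentiable (by simp)) _)).deriv

lemma contDiff_fderiv_apply (hu : ContDiff ℝ (⊤ : ℕ∞) (uncur u)) (v : ℝ × ℝ × ℝ) :
    ContDiff ℝ (⊤ : ℕ∞) (fun p => fderiv ℝ (uncur u) p v) :=
  (hu.fderiv_right (by simp)).clm_apply contDiff_const

lemma contDiff_px (hu : ContDiff ℝ (⊤ : ℕ∞) (uncur u)) : ContDiff ℝ (⊤ : ℕ∞) (uncur (px u)) := by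
  have : uncur (px u) = fun p => fderiv ℝ (uncur u) p (1, 0, 0) := by
    funext p
    exact px_eq hu p.1 p.2.1 p.2.2
  rw [this]; exact contDiff_fderiv_apply hu _

lemma contDiff_py (hu : ContDiff ℝ (⊤ : ℕ∞) (uncur u)) : ContDiff ℝ (⊤ : ℕ∞) (uncur (py u)) := by
  have : uncur (py u) = fun p => fderiv ℝ (uncur u) p (0, 1, 0) := by
    funext p
    exact py_eq hu p.1 p.2.1 p.2.2
  rw [this]; exact contDiff_fderiv_apply hu _

lemma contDiff_pz (hu : ContDiff ℝ (⊤ : ℕ∞) (uncur u)) : ContDiff ℝ (⊤ : ℕ∞) (uncur (pz u)) := by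
  have : uncur (pz u) = fun p => fderiv ℝ (uncur u) p (0, 0, 1) := by
    funext p
    exact pz_eq hu p.1 p.2.1 p.2.2
  rw [this]; exact contDiff_fderiv_apply hu _

lemma hasDerivAt_px (hu : ContDiff ℝ (⊤ : ℕ∞) (uncur u)) (x y z : ℝ) :
    HasDerivAt (fun t => u t y z) (px u x y z) x := by
  rw [px_eq hu]
  exact hasDerivAt_s1 (uncur u) x y z ((hu.differentiable (by simp)) _)

lemma hasDerivAt_py (hu : ContDiff ℝ (⊤ : ℕ∞) (uncur u)) (x y z : ℝ) :
    HasDerivAt (fun t => u x t z) (py u x y z) y := by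
  rw [py_eq hu]
  exact hasDerivAt_s2 (uncur u) x y z ((hu.differentiable (by simp)) _)

lemma hasDerivAt_pz (hu : ContDiff ℝ (⊤ : ℕ∞) (uncur u)) (x y z : ℝ) :
    HasDerivAt (fun t => u x y t) (pz u x y z) z := by
  rw [pz_eq hu]
  exact hasDerivAt_s3 (uncur u) x y z ((hu.differentiable (by simp)) _)

lemma fderiv_fderiv_apply (hu : ContDiff ℝ (⊤ : ℕ∞) (uncur u)) (p v w : ℝ × ℝ × ℝ) :
    fderiv ℝ (fun q => fderiv ℝ (uncur u) q v) p w
      = fderiv ℝ (fderiv ℝ (uncur u)) p w v := by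
  rw [fderiv_clm_apply (((hu.fderiv_right (m := (⊤ : ℕ∞)) (by simp)).differentiable (by simp)) p)
      (differentiableAt_const v)]
  simp

lemma mixed13 (hu : ContDiff ℝ (⊤ : ℕ∞) (uncur u)) (x y z : ℝ) :
    px (pz u) x y z = fderiv ℝ (fderiv ℝ (uncur u)) (x, y, z) (1, 0, 0) (0, 0, 1) := by
  have h1 : (fun t => pz u t y z) = fun t => fderiv ℝ (uncur u) (t, y, z) (0, 0, 1) :=
    funext fun t => pz_eq hu t y z
  show deriv (fun t => pz u t y z) x = _
  rw [h1, (hasDerivAt_s1 (fun q => fderiv ℝ (uncur u) q (0, 0, 1)) x y z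
      (((contDiff_fderiv_apply hu _).differentiable (by simp)) _)).deriv,
    fderiv_fderiv_apply hu]

lemma mixed12 (hu : ContDiff ℝ (⊤ : ℕ∞) (uncur u)) (x y z : ℝ) :
    px (py u) x y z = fderiv ℝ (fderiv ℝ (uncur u)) (x, y, z) (1, 0, 0) (0, 1, 0) := by
  have h1 : (fun t => py u t y z) = fun t => fderiv ℝ (uncur u) (t, y, z) (0, 1, 0) :=
    funext fun t => py_eq hu t y z
  show deriv (fun t => py u t y z) x = _
  rw [h1, (hasDerivAt_s1 (fun q => fderiv ℝ (uncur u) q (0, 1, 0)) x y z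
      (((contDiff_fderiv_apply hu _).differentiable (by simp)) _)).deriv,
    fderiv_fderiv_apply hu]

lemma mixed21 (hu : ContDiff ℝ (⊤ : ℕ∞) (uncur u)) (x y z : ℝ) :
    py (px u) x y z = fderiv ℝ (fderiv ℝ (uncur u)) (x, y, z) (0, 1, 0) (1, 0, 0) := by
  have h1 : (fun t => px u x t z) = fun t => fderiv ℝ (uncur u) (x, t, z) (1, 0, 0) :=
    funext fun t => px_eq hu x t z
  show deriv (fun t => px u x t z) y = _
  rw [h1, (hasDerivAt_s2 (fun q => fderiv ℝ (uncur u) q (1, 0, 0)) x y z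
      (((contDiff_fderiv_apply hu _).differentiable (by simp)) _)).deriv,
    fderiv_fderiv_apply hu]

lemma mixed23 (hu : ContDiff ℝ (⊤ : ℕ∞) (uncur u)) (x y z : ℝ) :
    py (pz u) x y z = fderiv ℝ (fderiv ℝ (uncur u)) (x, y, z) (0, 1, 0) (0, 0, 1) := by
  have h1 : (fun t => pz u x t z) = fun t => fderiv ℝ (uncur u) (x, t, z) (0, 0, 1) :=
    funext fun t => pz_eq hu x t z
  show deriv (fun t => pz u x t z) y = _
  rw [h1, (hasDerivAt_s2 (fun q => fderiv ℝ (uncur u) q (0, 0, 1)) x y z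
      (((contDiff_fderiv_apply hu _).differentiable (by simp)) _)).deriv,
    fderiv_fderiv_apply hu]

lemma mixed31 (hu : ContDiff ℝ (⊤ : ℕ∞) (uncur u)) (x y z : ℝ) :
    pz (px u) x y z = fderiv ℝ (fderiv ℝ (uncur u)) (x, y, z) (0, 0, 1) (1, 0, 0) := by
  have h1 : (fun t => px u x y t) = fun t => fderiv ℝ (uncur u) (x, y, t) (1, 0, 0) :=
    funext fun t => px_eq hu x y t
  show deriv (fun t => px u x y t) z = _
  rw [h1, (hasDerivAt_s3 (fun q => fderiv ℝ (uncur u) q (1, 0, 0)) x y z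
      (((contDiff_fderiv_apply hu _).differentiable (by simp)) _)).deriv,
    fderiv_fderiv_apply hu]

lemma mixed32 (hu : ContDiff ℝ (⊤ : ℕ∞) (uncur u)) (x y z : ℝ) :
    pz (py u) x y z = fderiv ℝ (fderiv ℝ (uncur u)) (x, y, z) (0, 0, 1) (0, 1, 0) := by
  have h1 : (fun t => py u x y t) = fun t => fderiv ℝ (uncur u) (x, y, t) (0, 1, 0) :=
    funext fun t => py_eq hu x y t
  show deriv (fun t => py u x y t) z = _
  rw [h1, (hasDerivAt_s3 (fun q => fderiv ℝ (uncur u) q (0, 1, 0)) x y z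
      (((contDiff_fderiv_apply hu _).differentiable (by simp)) _)).deriv,
    fderiv_fderiv_apply hu]

lemma symmSnd (hu : ContDiff ℝ (⊤ : ℕ∞) (uncur u)) (p : ℝ × ℝ × ℝ) :
    IsSymmSndFDerivAt ℝ (uncur u) p :=
  hu.contDiffAt.isSymmSndFDerivAt (by rw [minSmoothness_of_isRCLikeNormedField]; exact WithTop.coe_le_coe.mpr (le_top : (2 : ℕ∞) ≤ ⊤))

lemma comm_xz (hu : ContDiff ℝ (⊤ : ℕ∞) (uncur u)) (x y z : ℝ) :
    px (pz u) x y z = pz (px u) x y z := by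
  rw [mixed13 hu, mixed31 hu]; exact (symmSnd hu (x, y, z)).eq _ _

lemma comm_yz (hu : ContDiff ℝ (⊤ : ℕ∞) (uncur u)) (x y z : ℝ) :
    py (pz u) x y z = pz (py u) x y z := by
  rw [mixed23 hu, mixed32 hu]; exact (symmSnd hu (x, y, z)).eq _ _

lemma comm_xy (hu : ContDiff ℝ (⊤ : ℕ∞) (uncur u)) (x y z : ℝ) :
    px (py u) x y z = py (px u) x y z := by
  rw [mixed12 hu, mixed21 hu]; exact (symmSnd hu (x, y, z)).eq _ _

end SolvAux

open SolvAux in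
/-- If `ξ = f𝒳 + g𝒴 + h𝒵` satisfies the first-order system `∗dξ = λξ` together with
the coclosedness condition `d∗ξ = 0` on Solv, then `f`, `g`, `h` satisfy the displayed
second-order (Laplacian) equations. -/
theorem solv_second_order_equations
    (lam : ℝ) (f g h : ℝ → ℝ → ℝ → ℝ)
    (hf : ContDiff ℝ (⊤ : ℕ∞) (fun p : ℝ × ℝ × ℝ => f p.1 p.2.1 p.2.2))
    (hg : ContDiff ℝ (⊤ : ℕ∞) (fun p : ℝ × ℝ × ℝ => g p.1 p.2.1 p.2.2))
    (hh : ContDiff ℝ (⊤ : ℕ∞) (fun p : ℝ × ℝ × ℝ => h p.1 p.2.1 p.2.2))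
    (heq1 : ∀ x y z : ℝ,
      -(pz g x y z) + g x y z + Real.exp z * py h x y z = lam * f x y z)
    (heq2 : ∀ x y z : ℝ,
      pz f x y z + f x y z - Real.exp (-z) * px h x y z = lam * g x y z)
    (heq3 : ∀ x y z : ℝ,
      Real.exp (-z) * px g x y z - Real.exp z * py f x y z = lam * h x y z)
    (hcoclosed : ∀ x y z : ℝ,
      Real.exp (-z) * px f x y z + Real.exp z * py g x y z + pz h x y z = 0) :
    (∀ x y z : ℝ,
      solvLap h x y z
        = lam ^ 2 * h x y z - 2 * Real.exp (-z) * px f x y z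
            + 2 * Real.exp z * py g x y z) ∧
    (∀ x y z : ℝ,
      solvLap g x y z = (lam ^ 2 - 1) * g x y z - 2 * Real.exp z * py h x y z) ∧
    (∀ x y z : ℝ,
      solvLap f x y z = (lam ^ 2 - 1) * f x y z + 2 * Real.exp (-z) * px h x y z) := by
  have hF : ContDiff ℝ (⊤ : ℕ∞) (uncur f) := hf
  have hG : ContDiff ℝ (⊤ : ℕ∞) (uncur g) := hg
  have hH : ContDiff ℝ (⊤ : ℕ∞) (uncur h) := hh
  have hXF := contDiff_px hF; have hYF := contDiff_py hF; have hZF := contDiff_pz hF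
  have hXG := contDiff_px hG; have hYG := contDiff_py hG; have hZG := contDiff_pz hG
  have hXH := contDiff_px hH; have hYH := contDiff_py hH; have hZH := contDiff_pz hH
  -- x-derivative of heq2
  have D1 : ∀ x y z : ℝ, px (pz f) x y z + px f x y z
      - Real.exp (-z) * px (px h) x y z = lam * px g x y z := by
    intro x y z
    have hfun : (fun t => pz f t y z + f t y z - Real.exp (-z) * px h t y z)
        = fun t => lam * g t y z := funext fun t => heq2 t y z
    have hL := ((hasDerivAt_px hZF x y z).add (hasDerivAt_px hF x y z)).sub
      ((hasDerivAt_px hXH x y z).const_mul (Real.exp (-z)))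
    have hR := (hasDerivAt_px hG x y z).const_mul lam
    rw [← hL.deriv]; exact (congrArg (fun F => deriv F _) hfun).trans hR.deriv
  -- y-derivative of heq1
  have D2 : ∀ x y z : ℝ, -(py (pz g) x y z) + py g x y z
      + Real.exp z * py (py h) x y z = lam * py f x y z := by
    intro x y z
    have hfun : (fun t => -(pz g x t z) + g x t z + Real.exp z * py h x t z)
        = fun t => lam * f x t z := funext fun t => heq1 x t z
    have hL := (((hasDerivAt_py hZG x y z).neg).add (hasDerivAt_py hG x y z)).add
      ((hasDerivAt_py hYH x y z).const_mul (Real.exp z))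
    have hR := (hasDerivAt_py hF x y z).const_mul lam
    rw [← hL.deriv]; exact (congrArg (fun F => deriv F _) hfun).trans hR.deriv
  -- z-derivative of hcoclosed
  have D3 : ∀ x y z : ℝ,
      (Real.exp (-z) * -1 * px f x y z + Real.exp (-z) * pz (px f) x y z)
      + (Real.exp z * py g x y z + Real.exp z * pz (py g) x y z)
      + pz (pz h) x y z = 0 := by
    intro x y z
    have hfun : (fun t => Real.exp (-t) * px f x y t + Real.exp t * py g x y t + pz h x y t)
        = fun _ => (0 : ℝ) := funext fun t => hcoclosed x y t
    have hE1 : HasDerivAt (fun t : ℝ => Real.exp (-t)) (Real.exp (-z) * -1) z :=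
      (Real.hasDerivAt_exp (-z)).comp z ((hasDerivAt_id z).neg)
    have hL := ((hE1.mul (hasDerivAt_pz hXF x y z)).add
      ((Real.hasDerivAt_exp z).mul (hasDerivAt_pz hYG x y z))).add (hasDerivAt_pz hZH x y z)
    rw [← hL.deriv]; exact (congrArg (fun F => deriv F _) hfun).trans (deriv_const _ _)
  -- x-derivative of heq3
  have D4 : ∀ x y z : ℝ, Real.exp (-z) * px (px g) x y z
      - Real.exp z * px (py f) x y z = lam * px h x y z := by
    intro x y z
    have hfun : (fun t => Real.exp (-z) * px g t y z - Real.exp z * py f t y z)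
        = fun t => lam * h t y z := funext fun t => heq3 t y z
    have hL := ((hasDerivAt_px hXG x y z).const_mul (Real.exp (-z))).sub
      ((hasDerivAt_px hYF x y z).const_mul (Real.exp z))
    have hR := (hasDerivAt_px hH x y z).const_mul lam
    rw [← hL.deriv]; exact (congrArg (fun F => deriv F _) hfun).trans hR.deriv
  -- y-derivative of hcoclosed
  have D5 : ∀ x y z : ℝ, Real.exp (-z) * py (px f) x y z
      + Real.exp z * py (py g) x y z + py (pz h) x y z = 0 := by
    intro x y z
    have hfun : (fun t => Real.exp (-z) * px f x t z + Real.exp z * py g x t z + pz h x t z)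
        = fun _ => (0 : ℝ) := funext fun t => hcoclosed x t z
    have hL := (((hasDerivAt_py hXF x y z).const_mul (Real.exp (-z))).add
      ((hasDerivAt_py hYG x y z).const_mul (Real.exp z))).add (hasDerivAt_py hZH x y z)
    rw [← hL.deriv]; exact (congrArg (fun F => deriv F _) hfun).trans (deriv_const _ _)
  -- z-derivative of heq1
  have D6 : ∀ x y z : ℝ, -(pz (pz g) x y z) + pz g x y z
      + (Real.exp z * py h x y z + Real.exp z * pz (py h) x y z) = lam * pz f x y z := by
    intro x y z
    have hfun : (fun t => -(pz g x y t) + g x y t + Real.exp t * py h x y t)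
        = fun t => lam * f x y t := funext fun t => heq1 x y t
    have hL := (((hasDerivAt_pz hZG x y z).neg).add (hasDerivAt_pz hG x y z)).add
      ((Real.hasDerivAt_exp z).mul (hasDerivAt_pz hYH x y z))
    have hR := (hasDerivAt_pz hF x y z).const_mul lam
    rw [← hL.deriv]; exact (congrArg (fun F => deriv F _) hfun).trans hR.deriv
  -- x-derivative of hcoclosed
  have D7 : ∀ x y z : ℝ, Real.exp (-z) * px (px f) x y z
      + Real.exp z * px (py g) x y z + px (pz h) x y z = 0 := by
    intro x y z
    have hfun : (fun t => Real.exp (-z) * px f t y z + Real.exp z * py g t y z + pz h t y z)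
        = fun _ => (0 : ℝ) := funext fun t => hcoclosed t y z
    have hL := (((hasDerivAt_px hXF x y z).const_mul (Real.exp (-z))).add
      ((hasDerivAt_px hYG x y z).const_mul (Real.exp z))).add (hasDerivAt_px hZH x y z)
    rw [← hL.deriv]; exact (congrArg (fun F => deriv F _) hfun).trans (deriv_const _ _)
  -- y-derivative of heq3
  have D8 : ∀ x y z : ℝ, Real.exp (-z) * py (px g) x y z
      - Real.exp z * py (py f) x y z = lam * py h x y z := by
    intro x y z
    have hfun : (fun t => Real.exp (-z) * px g x t z - Real.exp z * py f x t z)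
        = fun t => lam * h x t z := funext fun t => heq3 x t z
    have hL := ((hasDerivAt_py hXG x y z).const_mul (Real.exp (-z))).sub
      ((hasDerivAt_py hYF x y z).const_mul (Real.exp z))
    have hR := (hasDerivAt_py hH x y z).const_mul lam
    rw [← hL.deriv]; exact (congrArg (fun F => deriv F _) hfun).trans hR.deriv
  -- z-derivative of heq2
  have D9 : ∀ x y z : ℝ, pz (pz f) x y z + pz f x y z
      - (Real.exp (-z) * -1 * px h x y z + Real.exp (-z) * pz (px h) x y z)
      = lam * pz g x y z := by
    intro x y z
    have hfun : (fun t => pz f x y t + f x y t - Real.exp (-t) * px h x y t)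
        = fun t => lam * g x y t := funext fun t => heq2 x y t
    have hE1 : HasDerivAt (fun t : ℝ => Real.exp (-t)) (Real.exp (-z) * -1) z :=
      (Real.hasDerivAt_exp (-z)).comp z ((hasDerivAt_id z).neg)
    have hL := ((hasDerivAt_pz hZF x y z).add (hasDerivAt_pz hF x y z)).sub
      (hE1.mul (hasDerivAt_pz hXH x y z))
    have hR := (hasDerivAt_pz hG x y z).const_mul lam
    rw [← hL.deriv]; exact (congrArg (fun F => deriv F _) hfun).trans hR.deriv
  have em2z : ∀ z : ℝ, Real.exp (-2 * z) = Real.exp (-z) * Real.exp (-z) := by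
    intro z; rw [← Real.exp_add]; ring_nf
  have e2z : ∀ z : ℝ, Real.exp (2 * z) = Real.exp z * Real.exp z := by
    intro z; rw [← Real.exp_add]; ring_nf
  refine ⟨fun x y z => ?_, fun x y z => ?_, fun x y z => ?_⟩
  · simp only [solvLap, em2z, e2z]
    linear_combination (Real.exp (-z)) * D1 x y z - (Real.exp z) * D2 x y z - D3 x y z
      - (Real.exp (-z)) * comm_xz hF x y z - (Real.exp z) * comm_yz hG x y z
      + lam * heq3 x y z
  · simp only [solvLap, em2z, e2z]
    linear_combination (-(Real.exp (-z))) * D4 x y z - (Real.exp z) * D5 x y z + D6 x y z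
      - (Real.exp z * Real.exp (-z)) * comm_xy hF x y z + (Real.exp z) * comm_yz hH x y z
      + heq1 x y z + lam * heq2 x y z
  · simp only [solvLap, em2z, e2z]
    linear_combination (-(Real.exp (-z))) * D7 x y z + (Real.exp z) * D8 x y z - D9 x y z
      + (Real.exp z * Real.exp (-z)) * comm_xy hG x y z + (Real.exp (-z)) * comm_xz hH x y z
      + heq2 x y z + lam * heq1 x y z
end

section
/- Let μ, μ' ∈ ℝ. Suppose f, g : ℝ → ℂ are differentiable functions satisfying f'(z) = μe^{−z}g(z) − iμ'e^{z}g(z) and g'(z) = μe^{−z}f(z) + iμ'e^{z}f(z) for all z ∈ ℝ. If moreover |f(z)| = |g(z)| for all z and g is nowhere zero, then the function z ↦ f(z)/\overline{g(z)} is constant on ℝ. -/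
/-- For solutions of the Fourier-mode Dirac system with `|f| = |g|` everywhere and
`g` nowhere zero, the quotient `f/ḡ` is constant. -/
theorem dirac_mode_quotient_constant
    (μ μ' : ℝ) (f g : ℝ → ℂ)
    (hfd : Differentiable ℝ f) (hgd : Differentiable ℝ g)
    (hf : ∀ z : ℝ, deriv f z
      = (μ : ℂ) * Real.exp (-z) * g z - Complex.I * (μ' : ℂ) * Real.exp z * g z)
    (hg : ∀ z : ℝ, deriv g z
      = (μ : ℂ) * Real.exp (-z) * f z + Complex.I * (μ' : ℂ) * Real.exp z * f z)
    (hnorm : ∀ z : ℝ, ‖f z‖ = ‖g z‖)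
    (hgne : ∀ z : ℝ, g z ≠ 0) :
    ∀ z w : ℝ, f z / (starRingEnd ℂ) (g z) = f w / (starRingEnd ℂ) (g w) := by
  have key : ∀ z : ℝ, HasDerivAt (fun z => f z / (starRingEnd ℂ) (g z)) 0 z := by
    intro z
    have hfz : HasDerivAt f (deriv f z) z := (hfd z).hasDerivAt
    have hgz : HasDerivAt g (deriv g z) z := (hgd z).hasDerivAt
    have hcg : HasDerivAt (fun z => (starRingEnd ℂ) (g z))
        ((starRingEnd ℂ) (deriv g z)) z := hgz.star
    have hne : (starRingEnd ℂ) (g z) ≠ 0 := by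
      simpa using hgne z
    have hdiv := hfz.div hcg hne
    have hmc : f z * (starRingEnd ℂ) (f z) = g z * (starRingEnd ℂ) (g z) := by
      rw [Complex.mul_conj, Complex.mul_conj]
      norm_cast
      simp [Complex.normSq_eq_norm_sq, hnorm z]
    have hzero : (deriv f z * (starRingEnd ℂ) (g z)
        - f z * (starRingEnd ℂ) (deriv g z)) / (starRingEnd ℂ) (g z) ^ 2 = 0 := by
      rw [hf z, hg z]
      rw [div_eq_zero_iff]
      left
      simp only [map_add, map_mul, map_sub, Complex.conj_I, Complex.conj_ofReal]
      linear_combination (Complex.I * (μ' : ℂ) * Real.exp z - (μ : ℂ) * Real.exp (-z)) * hmc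
    rw [← hzero]
    exact hdiv
  have hd : Differentiable ℝ (fun z => f z / (starRingEnd ℂ) (g z)) :=
    fun z => (key z).differentiableAt
  intro z w
  exact is_const_of_deriv_eq_zero hd (fun x => (key x).deriv) z w
end

section
/- Let μ, μ' ∈ ℝ and suppose that μ²e^{−2z} + (μ')²e^{2z} − 2μe^{−z} + 1/4 > 0 for all z ∈ ℝ. If f, g : ℝ → ℂ are smooth functions in the Schwartz-type class 𝒮 satisfying f'(z) = μe^{−z}g(z) − iμ'e^{z}g(z) and g'(z) = μe^{−z}f(z) + iμ'e^{z}f(z) for all z ∈ ℝ, then f and g are identically zero. -/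
open Filter

/-- A nonnegative convex function on `ℝ` dominated by decaying exponentials in both
directions vanishes identically. -/
lemma convex_decay_aux {φ : ℝ → ℝ} (hc : ConvexOn ℝ Set.univ φ) (h0 : ∀ z, 0 ≤ φ z)
    {C D : ℝ} (hC : ∀ z, φ z ≤ C * Real.exp (-z)) (hD : ∀ z, φ z ≤ D * Real.exp z) :
    ∀ z, φ z = 0 := by
  intro z
  refine le_antisymm ?_ (h0 z)
  have key : ∀ r : ℝ, φ z ≤ ((D * Real.exp z + C * Real.exp (-z)) / 2) * Real.exp (-r) := by
    intro r
    have h2 := hc.2 (Set.mem_univ (z - r)) (Set.mem_univ (z + r))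
      (by norm_num : (0:ℝ) ≤ 1/2) (by norm_num : (0:ℝ) ≤ 1/2) (by norm_num)
    have hz : (1/2 : ℝ) • (z - r) + (1/2 : ℝ) • (z + r) = z := by
      simp only [smul_eq_mul]; ring
    rw [hz] at h2
    have b1 := hD (z - r)
    have b2 := hC (z + r)
    have e1 : Real.exp (z - r) = Real.exp z * Real.exp (-r) := by
      rw [← Real.exp_add]; ring_nf
    have e2 : Real.exp (-(z + r)) = Real.exp (-z) * Real.exp (-r) := by
      rw [← Real.exp_add]; ring_nf
    rw [e1] at b1
    rw [e2] at b2
    simp only [smul_eq_mul] at h2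
    nlinarith [h2, b1, b2]
  have hlim : Tendsto (fun r : ℝ => ((D * Real.exp z + C * Real.exp (-z)) / 2) * Real.exp (-r))
      atTop (nhds 0) := by
    simpa using Real.tendsto_exp_neg_atTop_nhds_zero.const_mul
      ((D * Real.exp z + C * Real.exp (-z)) / 2)
  exact ge_of_tendsto' hlim key

/-- Core convexity argument: if `a' = A`, `A' = A + K a` with `K + 1/4 > 0`, and
`‖a‖²` is bounded and `O(e^{2z})`, then `a ≡ 0`. -/
lemma vanish_main (a A : ℝ → ℂ) (K : ℝ → ℝ) (C D : ℝ)
    (ha : ∀ z, HasDerivAt a (A z) z)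
    (hA : ∀ z, HasDerivAt A (A z + (K z : ℂ) * a z) z)
    (hK : ∀ z, 0 < K z + 1/4)
    (hC : ∀ z, Complex.normSq (a z) ≤ C)
    (hD : ∀ z, Complex.normSq (a z) ≤ D * Real.exp (2*z)) :
    ∀ z, a z = 0 := by
  have har : ∀ z, HasDerivAt (fun z => (a z).re) ((A z).re) z := fun z => by
    simpa [Function.comp_def] using Complex.reCLM.hasFDerivAt.comp_hasDerivAt z (ha z)
  have hai : ∀ z, HasDerivAt (fun z => (a z).im) ((A z).im) z := fun z => by
    simpa [Function.comp_def] using Complex.imCLM.hasFDerivAt.comp_hasDerivAt z (ha z)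
  have hAr : ∀ z, HasDerivAt (fun z => (A z).re) ((A z).re + K z * (a z).re) z := fun z => by
    have := Complex.reCLM.hasFDerivAt.comp_hasDerivAt z (hA z)
    simpa [Function.comp_def] using this
  have hAi : ∀ z, HasDerivAt (fun z => (A z).im) ((A z).im + K z * (a z).im) z := fun z => by
    have := Complex.imCLM.hasFDerivAt.comp_hasDerivAt z (hA z)
    simpa [Function.comp_def] using this
  have hE : ∀ z : ℝ, HasDerivAt (fun z : ℝ => Real.exp (-z)) (-Real.exp (-z)) z := fun z => by
    simpa [Function.comp_def] using (Real.hasDerivAt_exp (-z)).comp z (hasDerivAt_neg z)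
  set φ : ℝ → ℝ := fun z => Real.exp (-z) * Complex.normSq (a z) with hφdef
  set φ1 : ℝ → ℝ := fun z =>
    Real.exp (-z) * (2*((a z).re*(A z).re + (a z).im*(A z).im)
      - ((a z).re^2 + (a z).im^2)) with hφ1def
  set φ2 : ℝ → ℝ := fun z =>
    Real.exp (-z) * (2*((A z).re^2 + (A z).im^2)
      - 2*((a z).re*(A z).re + (a z).im*(A z).im)
      + (2*K z + 1)*((a z).re^2 + (a z).im^2)) with hφ2def
  have hφd : ∀ z, HasDerivAt φ (φ1 z) z := by
    intro z
    have hN : HasDerivAt (fun z => Complex.normSq (a z))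
        (2*((a z).re*(A z).re + (a z).im*(A z).im)) z := by
      have h := ((har z).mul (har z)).add ((hai z).mul (hai z))
      simp only [Complex.normSq_apply]
      refine h.congr_deriv ?_
      ring
    have h := (hE z).mul hN
    refine h.congr_deriv ?_
    simp only [hφ1def, Complex.normSq_apply]
    ring
  have hφ1d : ∀ z, HasDerivAt φ1 (φ2 z) z := by
    intro z
    have hP : HasDerivAt (fun z => 2*((a z).re*(A z).re + (a z).im*(A z).im)
        - ((a z).re^2 + (a z).im^2))
        (2*((A z).re*(A z).re + (a z).re*((A z).re + K z * (a z).re)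
            + ((A z).im*(A z).im + (a z).im*((A z).im + K z * (a z).im)))
          - ((A z).re*(a z).re + (a z).re*(A z).re
            + ((A z).im*(a z).im + (a z).im*(A z).im))) z := by
      have h1 := (((har z).mul (hAr z)).add ((hai z).mul (hAi z))).const_mul (2:ℝ)
      have h2 := ((har z).mul (har z)).add ((hai z).mul (hai z))
      have h := h1.sub h2
      refine (h.congr_deriv ?_).congr_of_eventuallyEq (Filter.Eventually.of_forall fun t => ?_)
      all_goals first
        | (simp only [Pi.mul_apply, Pi.add_apply, Pi.sub_apply]; ring)
        | ring
    have h := (hE z).mul hP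
    refine h.congr_deriv ?_
    simp only [hφ2def]
    ring
  have hφ2nonneg : ∀ z, 0 ≤ φ2 z := by
    intro z
    have hk := hK z
    have he := (Real.exp_pos (-z)).le
    have hin : 0 ≤ 2*((A z).re^2 + (A z).im^2)
        - 2*((a z).re*(A z).re + (a z).im*(A z).im)
        + (2*K z + 1)*((a z).re^2 + (a z).im^2) := by
      nlinarith [sq_nonneg ((A z).re - (a z).re/2), sq_nonneg ((A z).im - (a z).im/2),
        mul_nonneg hk.le (add_nonneg (sq_nonneg (a z).re) (sq_nonneg (a z).im))]
    exact mul_nonneg he hin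
  have hdφ : deriv φ = φ1 := funext fun z => (hφd z).deriv
  have hdφ1 : deriv φ1 = φ2 := funext fun z => (hφ1d z).deriv
  have hconv : ConvexOn ℝ Set.univ φ := by
    refine convexOn_univ_of_deriv2_nonneg (fun z => (hφd z).differentiableAt) ?_ ?_
    · rw [hdφ]; exact fun z => (hφ1d z).differentiableAt
    · intro x
      have : deriv^[2] φ x = deriv (deriv φ) x := by
        simp only [Function.iterate_succ, Function.iterate_zero, Function.comp_apply, id]
      rw [this, hdφ, hdφ1]
      exact hφ2nonneg x
  have h0 : ∀ z, 0 ≤ φ z := fun z =>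
    mul_nonneg (Real.exp_pos (-z)).le (Complex.normSq_nonneg _)
  have hCb : ∀ z, φ z ≤ C * Real.exp (-z) := by
    intro z
    have := mul_le_mul_of_nonneg_left (hC z) (Real.exp_pos (-z)).le
    simpa [mul_comm] using this
  have hDb : ∀ z, φ z ≤ D * Real.exp z := by
    intro z
    have h := mul_le_mul_of_nonneg_left (hD z) (Real.exp_pos (-z)).le
    have e : Real.exp (-z) * (D * Real.exp (2*z)) = D * Real.exp z := by
      rw [mul_comm D, ← mul_assoc, ← Real.exp_add]
      ring_nf
    rw [e] at h
    exact h
  have hzero := convex_decay_aux hconv h0 hCb hDb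
  intro z
  have : Complex.normSq (a z) = 0 := by
    have hz := hzero z
    have hep := Real.exp_pos (-z)
    simp only [hφdef] at hz
    nlinarith [Complex.normSq_nonneg (a z)]
  exact Complex.normSq_eq_zero.mp this

/-- First-order vanishing: `b' = -(c e^{-z}) b` with `‖b‖² = O(e^{-2z})` forces `b ≡ 0`. -/
lemma vanish_first_order (b : ℝ → ℂ) (c : ℝ)
    (hb : ∀ z, HasDerivAt b (-((c:ℂ) * Real.exp (-z)) * b z) z)
    (C : ℝ) (hC : ∀ z, Complex.normSq (b z) ≤ C * Real.exp (-2*z)) :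
    ∀ z, b z = 0 := by
  have hbr : ∀ z, HasDerivAt (fun z => (b z).re) (-(c * Real.exp (-z)) * (b z).re) z := fun z => by
    have h := Complex.reCLM.hasFDerivAt.comp_hasDerivAt z (hb z)
    have hval : (-((c:ℂ) * Real.exp (-z)) * b z).re = -(c * Real.exp (-z)) * (b z).re := by
      simp only [Complex.neg_re, Complex.mul_re, Complex.mul_im, Complex.ofReal_re,
        Complex.ofReal_im, Complex.neg_im, zero_mul, mul_zero, sub_zero, add_zero, neg_zero]
    rw [← hval]
    exact h
  have hbi : ∀ z, HasDerivAt (fun z => (b z).im) (-(c * Real.exp (-z)) * (b z).im) z := fun z => by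
    have h := Complex.imCLM.hasFDerivAt.comp_hasDerivAt z (hb z)
    have hval : (-((c:ℂ) * Real.exp (-z)) * b z).im = -(c * Real.exp (-z)) * (b z).im := by
      simp only [Complex.neg_im, Complex.mul_im, Complex.mul_re, Complex.ofReal_re,
        Complex.ofReal_im, Complex.neg_re, zero_mul, mul_zero, sub_zero, add_zero, neg_zero,
        zero_add]
      try ring
    rw [← hval]
    exact h
  have hE : ∀ z : ℝ, HasDerivAt (fun z : ℝ => Real.exp (-(2*c) * Real.exp (-z)))
      (Real.exp (-(2*c) * Real.exp (-z)) * (2*c*Real.exp (-z))) z := by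
    intro z
    have hinner : HasDerivAt (fun z : ℝ => -(2*c) * Real.exp (-z)) (2*c*Real.exp (-z)) z := by
      have h1 : HasDerivAt (fun z : ℝ => Real.exp (-z)) (-Real.exp (-z)) z := by
        simpa [Function.comp_def] using (Real.hasDerivAt_exp (-z)).comp z (hasDerivAt_neg z)
      have := h1.const_mul (-(2*c))
      refine this.congr_deriv ?_
      ring
    exact (Real.hasDerivAt_exp _).comp z hinner
  set ψ : ℝ → ℝ := fun z => Complex.normSq (b z) * Real.exp (-(2*c) * Real.exp (-z)) with hψdef
  have hψd : ∀ z, HasDerivAt ψ 0 z := by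
    intro z
    have hN : HasDerivAt (fun z => Complex.normSq (b z))
        (-(2*c*Real.exp (-z)) * Complex.normSq (b z)) z := by
      have h := ((hbr z).mul (hbr z)).add ((hbi z).mul (hbi z))
      simp only [Complex.normSq_apply]
      refine h.congr_deriv ?_
      ring
    have h := hN.mul (hE z)
    refine h.congr_deriv ?_
    simp only [Complex.normSq_apply]
    ring
  have hconst : ∀ x y : ℝ, ψ x = ψ y :=
    is_const_of_deriv_eq_zero (fun z => (hψd z).differentiableAt) (fun z => (hψd z).deriv)
  -- ψ tends to 0 along atTop
  have hψ0 : ∀ z, ψ z ≤ 0 := by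
    intro z
    have key : ∀ᶠ t in atTop, ψ z ≤ (C * Real.exp (2*|c|)) * Real.exp (-(2*t)) := by
      filter_upwards [eventually_ge_atTop (0:ℝ)] with t ht
      rw [hconst z t]
      have h1 : Complex.normSq (b t) ≤ C * Real.exp (-2*t) := hC t
      have h2 : Real.exp (-(2*c) * Real.exp (-t)) ≤ Real.exp (2*|c|) := by
        apply Real.exp_le_exp.mpr
        have het : Real.exp (-t) ≤ 1 := Real.exp_le_one_iff.mpr (by linarith)
        have hetp : (0:ℝ) ≤ Real.exp (-t) := (Real.exp_pos _).le
        have h3 : -(2*c) ≤ 2*|c| := by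
          have h4 : |2*c| = 2*|c| := by rw [abs_mul]; norm_num
          linarith [neg_le_abs (2*c)]
        have h5 : -(2*c) * Real.exp (-t) ≤ (2*|c|) * Real.exp (-t) :=
          mul_le_mul_of_nonneg_right h3 hetp
        have h6 : (2*|c|) * Real.exp (-t) ≤ (2*|c|) * 1 :=
          mul_le_mul_of_nonneg_left het (by positivity)
        linarith
      have hnn : (0:ℝ) ≤ Complex.normSq (b t) := Complex.normSq_nonneg _
      have hCnn : (0:ℝ) ≤ C * Real.exp (-2*t) := le_trans hnn h1
      calc Complex.normSq (b t) * Real.exp (-(2*c) * Real.exp (-t))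
          ≤ (C * Real.exp (-2*t)) * Real.exp (2*|c|) := by
            exact mul_le_mul h1 h2 (Real.exp_pos _).le hCnn
        _ = (C * Real.exp (2*|c|)) * Real.exp (-(2*t)) := by ring_nf
    have hlim : Tendsto (fun t : ℝ => (C * Real.exp (2*|c|)) * Real.exp (-(2*t)))
        atTop (nhds 0) := by
      have h2t : Tendsto (fun t : ℝ => 2*t) atTop atTop :=
        Tendsto.const_mul_atTop two_pos tendsto_id
      have := (Real.tendsto_exp_neg_atTop_nhds_zero.comp h2t).const_mul (C * Real.exp (2*|c|))
      simpa [Function.comp] using this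
    exact ge_of_tendsto hlim key
  intro z
  have hψnn : 0 ≤ ψ z := mul_nonneg (Complex.normSq_nonneg _) (Real.exp_pos _).le
  have hψz : ψ z = 0 := le_antisymm (hψ0 z) hψnn
  have : Complex.normSq (b z) = 0 := by
    have hep := Real.exp_pos (-(2*c) * Real.exp (-z))
    simp only [hψdef] at hψz
    nlinarith [Complex.normSq_nonneg (b z)]
  exact Complex.normSq_eq_zero.mp this

/-- Non-existence of nonzero Fourier-mode harmonic spinors: if the potential
`μ²e^{−2z} + (μ')²e^{2z} − 2μe^{−z} + 1/4` is everywhere positive, then any solution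
`(f, g)` of the Fourier-mode Dirac system lying in the Schwartz-type class vanishes
identically. -/
theorem dirac_mode_no_solutions
    (μ μ' : ℝ)
    (hpos : ∀ z : ℝ,
      0 < μ ^ 2 * Real.exp (-2 * z) + μ' ^ 2 * Real.exp (2 * z)
            - 2 * μ * Real.exp (-z) + 1 / 4)
    (f g : ℝ → ℂ)
    (hfs : ContDiff ℝ (⊤ : ℕ∞) f) (hgs : ContDiff ℝ (⊤ : ℕ∞) g)
    (hfS : SchwartzType f) (hgS : SchwartzType g)
    (hf : ∀ z : ℝ, deriv f z
      = (μ : ℂ) * Real.exp (-z) * g z - Complex.I * (μ' : ℂ) * Real.exp z * g z)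
    (hg : ∀ z : ℝ, deriv g z
      = (μ : ℂ) * Real.exp (-z) * f z + Complex.I * (μ' : ℂ) * Real.exp z * f z) :
    f = 0 ∧ g = 0 := by
  have hfd : ∀ z : ℝ, HasDerivAt f
      ((μ : ℂ) * Real.exp (-z) * g z - Complex.I * (μ' : ℂ) * Real.exp z * g z) z :=
    fun z => hf z ▸ ((hfs.differentiable (by simp) z).hasDerivAt)
  have hgd : ∀ z : ℝ, HasDerivAt g
      ((μ : ℂ) * Real.exp (-z) * f z + Complex.I * (μ' : ℂ) * Real.exp z * f z) z :=
    fun z => hg z ▸ ((hgs.differentiable (by simp) z).hasDerivAt)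
  have hE : ∀ z : ℝ, HasDerivAt (fun z : ℝ => Real.exp (-z)) (-Real.exp (-z)) z := fun z => by
    simpa [Function.comp_def] using (Real.hasDerivAt_exp (-z)).comp z (hasDerivAt_neg z)
  have e1 : ∀ z : ℝ, Real.exp (-2*z) = Real.exp (-z) * Real.exp (-z) := fun z => by
    rw [← Real.exp_add]; ring_nf
  have e2 : ∀ z : ℝ, Real.exp (2*z) = Real.exp z * Real.exp z := fun z => by
    rw [← Real.exp_add]; ring_nf
  have had : ∀ z : ℝ, HasDerivAt (fun z => f z + g z)
      ((μ : ℂ) * Real.exp (-z) * (f z + g z)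
        + Complex.I * (μ' : ℂ) * Real.exp z * (f z - g z)) z := by
    intro z
    have h := (hfd z).add (hgd z)
    refine h.congr_deriv ?_
    ring
  have hAd : ∀ z : ℝ, HasDerivAt
      (fun z => (μ : ℂ) * Real.exp (-z) * (f z + g z)
        + Complex.I * (μ' : ℂ) * Real.exp z * (f z - g z))
      (((μ : ℂ) * Real.exp (-z) * (f z + g z)
          + Complex.I * (μ' : ℂ) * Real.exp z * (f z - g z))
        + ((μ^2 * Real.exp (-2*z) + μ'^2 * Real.exp (2*z) - 2*μ*Real.exp (-z) : ℝ) : ℂ)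
          * (f z + g z)) z := by
    intro z
    have h1 : HasDerivAt (fun z : ℝ => ((Real.exp (-z) : ℝ) : ℂ))
        ((-Real.exp (-z) : ℝ) : ℂ) z := (hE z).ofReal_comp
    have h2 : HasDerivAt (fun z : ℝ => ((Real.exp z : ℝ) : ℂ))
        ((Real.exp z : ℝ) : ℂ) z := (Real.hasDerivAt_exp z).ofReal_comp
    have hc1 : HasDerivAt (fun z : ℝ => (μ : ℂ) * Real.exp (-z))
        ((μ : ℂ) * ((-Real.exp (-z) : ℝ) : ℂ)) z := h1.const_mul (μ : ℂ)
    have hc2 : HasDerivAt (fun z : ℝ => Complex.I * (μ' : ℂ) * Real.exp z)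
        (Complex.I * (μ' : ℂ) * ((Real.exp z : ℝ) : ℂ)) z :=
      h2.const_mul (Complex.I * (μ' : ℂ))
    have hbd' := (hfd z).sub (hgd z)
    have h := (hc1.mul (had z)).add (hc2.mul hbd')
    refine h.congr_deriv ?_
    rw [e1 z, e2 z]
    push_cast [Pi.sub_apply]
    linear_combination (-((μ' : ℂ)^2 * (Complex.exp (z:ℂ))^2 * (f z + g z))) * Complex.I_sq
  -- Schwartz bounds
  obtain ⟨Cf, hCf⟩ := hfS 0 0
  obtain ⟨Cg, hCg⟩ := hgS 0 0
  obtain ⟨Df, hDf⟩ := hfS (-1) 0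
  obtain ⟨Dg, hDg⟩ := hgS (-1) 0
  obtain ⟨Ef, hEf⟩ := hfS 1 0
  obtain ⟨Eg, hEg⟩ := hgS 1 0
  simp only [iteratedDeriv_zero] at hCf hCg hDf hDg hEf hEg
  have hCf' : ∀ z, ‖f z‖ ≤ Cf := fun z => by simpa using hCf z
  have hCg' : ∀ z, ‖g z‖ ≤ Cg := fun z => by simpa using hCg z
  have hexp1 : ∀ u : ℝ → ℂ, ∀ (D : ℝ), (∀ z : ℝ, Real.exp (((-1 : ℤ) : ℝ) * z) * ‖u z‖ ≤ D) →
      ∀ z : ℝ, ‖u z‖ ≤ D * Real.exp z := by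
    intro u D hD z
    have h := hD z
    have hz : Real.exp (((-1 : ℤ) : ℝ) * z) = Real.exp (-z) := by norm_num
    rw [hz] at h
    have key : Real.exp z * (Real.exp (-z) * ‖u z‖) = ‖u z‖ := by
      rw [← mul_assoc, ← Real.exp_add]; simp
    calc ‖u z‖ = Real.exp z * (Real.exp (-z) * ‖u z‖) := key.symm
      _ ≤ Real.exp z * D := mul_le_mul_of_nonneg_left h (Real.exp_pos z).le
      _ = D * Real.exp z := mul_comm _ _
  have hexp2 : ∀ u : ℝ → ℂ, ∀ (D : ℝ), (∀ z : ℝ, Real.exp (((1 : ℤ) : ℝ) * z) * ‖u z‖ ≤ D) →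
      ∀ z : ℝ, ‖u z‖ ≤ D * Real.exp (-z) := by
    intro u D hD z
    have h := hD z
    have hz : Real.exp (((1 : ℤ) : ℝ) * z) = Real.exp z := by norm_num
    rw [hz] at h
    have key : Real.exp (-z) * (Real.exp z * ‖u z‖) = ‖u z‖ := by
      rw [← mul_assoc, ← Real.exp_add]; simp
    calc ‖u z‖ = Real.exp (-z) * (Real.exp z * ‖u z‖) := key.symm
      _ ≤ Real.exp (-z) * D := mul_le_mul_of_nonneg_left h (Real.exp_pos (-z)).le
      _ = D * Real.exp (-z) := mul_comm _ _
  have hDf' := hexp1 f Df hDf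
  have hDg' := hexp1 g Dg hDg
  have hEf' := hexp2 f Ef hEf
  have hEg' := hexp2 g Eg hEg
  have hnormSq : ∀ w : ℂ, Complex.normSq w = ‖w‖^2 := fun w => by
    rw [Complex.sq_norm]
  have hCa : ∀ z, Complex.normSq (f z + g z) ≤ (Cf + Cg)^2 := by
    intro z
    have h1 : ‖f z + g z‖ ≤ Cf + Cg :=
      le_trans (norm_add_le _ _) (add_le_add (hCf' z) (hCg' z))
    rw [hnormSq]
    exact pow_le_pow_left₀ (norm_nonneg _) h1 2
  have hDa : ∀ z, Complex.normSq (f z + g z) ≤ (Df + Dg)^2 * Real.exp (2*z) := by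
    intro z
    have h1 : ‖f z + g z‖ ≤ (Df + Dg) * Real.exp z := by
      calc ‖f z + g z‖ ≤ ‖f z‖ + ‖g z‖ := norm_add_le _ _
        _ ≤ Df * Real.exp z + Dg * Real.exp z := add_le_add (hDf' z) (hDg' z)
        _ = (Df + Dg) * Real.exp z := by ring
    rw [hnormSq]
    calc ‖f z + g z‖^2 ≤ ((Df + Dg) * Real.exp z)^2 :=
          pow_le_pow_left₀ (norm_nonneg _) h1 2
      _ = (Df + Dg)^2 * Real.exp (2*z) := by rw [e2 z]; ring
  have hKpos : ∀ z : ℝ, 0 < (μ^2 * Real.exp (-2*z) + μ'^2 * Real.exp (2*z)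
      - 2*μ*Real.exp (-z)) + 1/4 := by
    intro z
    have := hpos z
    linarith
  have ha0 : ∀ z, f z + g z = 0 :=
    vanish_main (fun z => f z + g z) _ _ ((Cf + Cg)^2) ((Df + Dg)^2) had hAd hKpos hCa hDa
  have hbd : ∀ z : ℝ, HasDerivAt (fun z => f z - g z)
      (-((μ : ℂ) * Real.exp (-z)) * (f z - g z)) z := by
    intro z
    have h := (hfd z).sub (hgd z)
    refine h.congr_deriv ?_
    have hg0 : g z = -f z := by
      have := ha0 z
      linear_combination this
    rw [hg0]
    ring
  have hEa : ∀ z, Complex.normSq (f z - g z) ≤ (Ef + Eg)^2 * Real.exp (-2*z) := by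
    intro z
    have h1 : ‖f z - g z‖ ≤ (Ef + Eg) * Real.exp (-z) := by
      calc ‖f z - g z‖ ≤ ‖f z‖ + ‖g z‖ := norm_sub_le _ _
        _ ≤ Ef * Real.exp (-z) + Eg * Real.exp (-z) := add_le_add (hEf' z) (hEg' z)
        _ = (Ef + Eg) * Real.exp (-z) := by ring
    rw [hnormSq]
    calc ‖f z - g z‖^2 ≤ ((Ef + Eg) * Real.exp (-z))^2 :=
          pow_le_pow_left₀ (norm_nonneg _) h1 2
      _ = (Ef + Eg)^2 * Real.exp (-2*z) := by rw [e1 z]; ring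
  have hb0 : ∀ z, f z - g z = 0 :=
    vanish_first_order (fun z => f z - g z) μ hbd ((Ef + Eg)^2) hEa
  constructor
  · funext z
    show f z = 0
    linear_combination (ha0 z + hb0 z) / 2
  · funext z
    show g z = 0
    linear_combination (ha0 z - hb0 z) / 2
end
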